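/- arXiv:2508.17978 — 8 statements merged into one kernel-verified Lean document; each statement's English description precedes it below -/
import Mathlib

section
/- Let N ≥ 1 individuals be given, with individual n having distribution P^n ∈ Δ and probability weighting function w_n, and let U^n be the rank-dependent utility of individual n (with respect to P^n and w_n). Let δ_a : ℕ → [0,1] be a nonincreasing function with δ_a(0) = 1 and define the social planner's utility U^0_a(x) := Σ_{t=0}^∞ δ_a(t)·x_t for every project x. If the Pareto condition holds — i.e., for all projects x, y, U^n(x) ≥ U^n(y) for all n = 1, …, N implies U^0_a(x) ≥ U^0_a(y) — then there exist nonnegative real numbers λ_1, …, λ_N summing to one such that δ_a(t) = Σ_{n=1}^N λ_n · Σ_{m=1}^M β_m^t · (w_n(P^n_1 + ⋯ + P^n_m) − w_n(P^n_1 + ⋯ + P^n_{m−1})) for every t = 0, 1, 2, …. -/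
open MeasureTheory Set

noncomputable section

/-- A project: a finitely supported sequence of nonnegative payoffs. -/
def IsProject (x : ℕ → ℝ) : Prop :=
  (Function.support x).Finite ∧ ∀ t, 0 ≤ x t

/-- Discounted value `⟨β, x⟩ = Σ_t β^t x_t`. -/
def dv (β : ℝ) (x : ℕ → ℝ) : ℝ := ∑' t, β ^ t * x t

/-- A probability weighting function on `[0,1]`. -/
def IsWeighting (w : ℝ → ℝ) : Prop :=
  ContinuousOn w (Icc 0 1) ∧ StrictMonoOn w (Icc 0 1) ∧
  MapsTo w (Icc 0 1) (Icc 0 1) ∧ w 0 = 0 ∧ w 1 = 1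

/-- Cumulative probability `P_1 + ⋯ + P_m`. -/
def cumul {M : ℕ} (P : Fin M → ℝ) (m : Fin M) : ℝ := ∑ i ∈ Finset.Iic m, P i

/-- Cumulative probability `P_1 + ⋯ + P_{m-1}` (empty sum is 0). -/
def cumulLt {M : ℕ} (P : Fin M → ℝ) (m : Fin M) : ℝ := ∑ i ∈ Finset.Iio m, P i

/-- Rank-dependent utility of a project. -/
def RDU {M : ℕ} (β P : Fin M → ℝ) (w : ℝ → ℝ) (x : ℕ → ℝ) : ℝ :=
  ∑ m, (w (cumul P m) - w (cumulLt P m)) * dv (β m) x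

lemma aux_partial_mem {M : ℕ} {P : Fin M → ℝ} (hP : P ∈ stdSimplex ℝ (Fin M))
    (s : Finset (Fin M)) : (∑ i ∈ s, P i) ∈ Icc (0:ℝ) 1 := by
  constructor
  · exact Finset.sum_nonneg fun i _ => hP.1 i
  · rw [← hP.2]
    exact Finset.sum_le_sum_of_subset_of_nonneg (Finset.subset_univ s) fun i _ _ => hP.1 i

lemma aux_weight_nonneg {M : ℕ} {P : Fin M → ℝ} (hP : P ∈ stdSimplex ℝ (Fin M))
    {w : ℝ → ℝ} (hw : IsWeighting w) (m : Fin M) :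
    0 ≤ w (cumul P m) - w (cumulLt P m) := by
  have h1 := aux_partial_mem hP (Finset.Iio m)
  have h2 := aux_partial_mem hP (Finset.Iic m)
  have hle : cumulLt P m ≤ cumul P m :=
    Finset.sum_le_sum_of_subset_of_nonneg Finset.Iio_subset_Iic_self fun i _ _ => hP.1 i
  exact sub_nonneg.2 (hw.2.1.monotoneOn h1 h2 hle)

lemma aux_sum_weights {M : ℕ} {P : Fin M → ℝ} (hP : P ∈ stdSimplex ℝ (Fin M))
    {w : ℝ → ℝ} (hw : IsWeighting w) :
    ∑ m, (w (cumul P m) - w (cumulLt P m)) = 1 := by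
  classical
  let Q : ℕ → ℝ := fun j => ∑ i ∈ Finset.univ.filter (fun i : Fin M => i.val < j), P i
  have hlt : ∀ m : Fin M, cumulLt P m = Q m.val := by
    intro m
    show _ = ∑ i ∈ Finset.univ.filter (fun i : Fin M => i.val < (m.val : ℕ)), P i
    unfold cumulLt
    congr 1
    ext i
    simp only [Finset.mem_Iio, Finset.mem_filter, Finset.mem_univ, true_and, Fin.lt_def]
  have hle : ∀ m : Fin M, cumul P m = Q (m.val + 1) := by
    intro m
    show _ = ∑ i ∈ Finset.univ.filter (fun i : Fin M => i.val < (m.val + 1 : ℕ)), P i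
    unfold cumul
    congr 1
    ext i
    simp only [Finset.mem_Iic, Finset.mem_filter, Finset.mem_univ, true_and, Fin.le_def,
      Nat.lt_succ_iff]
  have hQM : Q M = 1 := by
    show ∑ i ∈ Finset.univ.filter (fun i : Fin M => i.val < M), P i = 1
    rw [Finset.filter_true_of_mem (fun i _ => i.isLt), ← hP.2]
  have hQ0 : Q 0 = 0 := by
    show ∑ i ∈ Finset.univ.filter (fun i : Fin M => i.val < 0), P i = 0
    simp
  calc ∑ m, (w (cumul P m) - w (cumulLt P m))
      = ∑ m : Fin M, (w (Q (m.val + 1)) - w (Q m.val)) := by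
        exact Finset.sum_congr rfl fun m _ => by rw [hlt, hle]
    _ = ∑ j ∈ Finset.range M, (w (Q (j + 1)) - w (Q j)) :=
        Fin.sum_univ_eq_sum_range (fun j => w (Q (j+1)) - w (Q j)) M
    _ = w (Q M) - w (Q 0) := Finset.sum_range_sub (fun j => w (Q j)) M
    _ = 1 := by rw [hQM, hQ0, hw.2.2.2.1, hw.2.2.2.2]; ring

lemma aux_tsum_mul_eq_sum {f x : ℕ → ℝ} {K : ℕ} (hx : ∀ t, K ≤ t → x t = 0) :
    ∑' t, f t * x t = ∑ t ∈ Finset.range K, f t * x t :=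
  tsum_eq_sum fun b hb => by rw [hx b (by simpa using hb), mul_zero]

lemma aux_RDU_eq_sum {M : ℕ} (β P : Fin M → ℝ) (w : ℝ → ℝ) {x : ℕ → ℝ} {K : ℕ}
    (hx : ∀ t, K ≤ t → x t = 0) :
    RDU β P w x = ∑ t ∈ Finset.range K,
      (∑ m, β m ^ t * (w (cumul P m) - w (cumulLt P m))) * x t := by
  unfold RDU dv
  have hdv : ∀ m : Fin M, ∑' t, β m ^ t * x t = ∑ t ∈ Finset.range K, β m ^ t * x t :=
    fun m => aux_tsum_mul_eq_sum hx
  simp_rw [hdv, Finset.mul_sum]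
  rw [Finset.sum_comm]
  exact Finset.sum_congr rfl fun t _ => by rw [Finset.sum_mul]; exact Finset.sum_congr rfl fun m _ => by ring

lemma aux_clm_eq_sum {k : ℕ} (f : (Fin k → ℝ) →L[ℝ] ℝ) (v : Fin k → ℝ) :
    f v = ∑ i, v i * f (fun j => if i = j then 1 else 0) := by
  conv_lhs => rw [pi_eq_sum_univ v]
  rw [map_sum]
  exact Finset.sum_congr rfl fun i _ => by rw [f.map_smul]; simp

def phiL (N k : ℕ) (c : Fin N → ℕ → ℝ) : (Fin N → ℝ) →ₗ[ℝ] (Fin k → ℝ) where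
  toFun l := fun t => ∑ n, l n * c n t.val
  map_add' a b := by
    funext t
    simp [add_mul, Finset.sum_add_distrib]
  map_smul' r a := by
    funext t
    simp [Finset.mul_sum, mul_assoc]

theorem stmt0 (N M : ℕ) (hN : 1 ≤ N) (hM : 2 ≤ M)
    (β : Fin M → ℝ) (hβmem : ∀ m, β m ∈ Icc (0:ℝ) 1) (hβ : StrictAnti β)
    (P : Fin N → Fin M → ℝ) (hP : ∀ n, P n ∈ stdSimplex ℝ (Fin M))
    (w : Fin N → ℝ → ℝ) (hw : ∀ n, IsWeighting (w n))
    (δa : ℕ → ℝ) (hδanti : Antitone δa) (hδ0 : δa 0 = 1)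
    (hδmem : ∀ t, δa t ∈ Icc (0:ℝ) 1)
    (pareto : ∀ x y : ℕ → ℝ, IsProject x → IsProject y →
      (∀ n, RDU β (P n) (w n) y ≤ RDU β (P n) (w n) x) →
      (∑' t, δa t * y t) ≤ (∑' t, δa t * x t)) :
    ∃ lam : Fin N → ℝ, (∀ n, 0 ≤ lam n) ∧ (∑ n, lam n) = 1 ∧
      ∀ t : ℕ, δa t = ∑ n, lam n *
        ∑ m, (β m) ^ t * (w n (cumul (P n) m) - w n (cumulLt (P n) m)) := by
  classical
  -- coefficient sequences
  let c : Fin N → ℕ → ℝ := fun n t =>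
    ∑ m, (β m) ^ t * (w n (cumul (P n) m) - w n (cumulLt (P n) m))
  have hc0 : ∀ n, c n 0 = 1 := by
    intro n
    show (∑ m, (β m) ^ 0 * (w n (cumul (P n) m) - w n (cumulLt (P n) m))) = 1
    simp only [pow_zero, one_mul]
    exact aux_sum_weights (hP n) (hw n)
  -- the Farkas-type consequence of Pareto
  have key : ∀ (K : ℕ) (z : ℕ → ℝ), (∀ t, K ≤ t → z t = 0) →
      (∀ n, 0 ≤ ∑ t ∈ Finset.range K, c n t * z t) →
      0 ≤ ∑ t ∈ Finset.range K, δa t * z t := by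
    intro K z hz hpos
    let x : ℕ → ℝ := fun t => max (z t) 0
    let y : ℕ → ℝ := fun t => max (-z t) 0
    have hx0 : ∀ t, K ≤ t → x t = 0 := fun t ht => by simp [x, hz t ht]
    have hy0 : ∀ t, K ≤ t → y t = 0 := fun t ht => by simp [y, hz t ht]
    have hxy : ∀ t, x t - y t = z t := fun t => max_zero_sub_max_neg_zero_eq_self _
    have hxP : IsProject x := by
      refine ⟨Set.Finite.subset (Finset.range K).finite_toSet fun t ht => ?_,
        fun t => le_max_right _ _⟩
      simp only [Finset.coe_range, Set.mem_Iio]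
      by_contra hK
      exact ht (hx0 t (by omega))
    have hyP : IsProject y := by
      refine ⟨Set.Finite.subset (Finset.range K).finite_toSet fun t ht => ?_,
        fun t => le_max_right _ _⟩
      simp only [Finset.coe_range, Set.mem_Iio]
      by_contra hK
      exact ht (hy0 t (by omega))
    have hRDU : ∀ n, RDU β (P n) (w n) y ≤ RDU β (P n) (w n) x := by
      intro n
      rw [aux_RDU_eq_sum β (P n) (w n) hx0, aux_RDU_eq_sum β (P n) (w n) hy0]
      have hdiff : ∑ t ∈ Finset.range K, c n t * x t - ∑ t ∈ Finset.range K, c n t * y t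
          = ∑ t ∈ Finset.range K, c n t * z t := by
        rw [← Finset.sum_sub_distrib]
        exact Finset.sum_congr rfl fun t _ => by rw [← hxy t]; ring
      have := hpos n
      have h1 : (∑ t ∈ Finset.range K, c n t * y t) ≤ ∑ t ∈ Finset.range K, c n t * x t := by
        linarith
      exact h1
    have hpar := pareto x y hxP hyP hRDU
    rw [aux_tsum_mul_eq_sum hx0, aux_tsum_mul_eq_sum hy0] at hpar
    have hdiff : ∑ t ∈ Finset.range K, δa t * x t - ∑ t ∈ Finset.range K, δa t * y t
        = ∑ t ∈ Finset.range K, δa t * z t := by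
      rw [← Finset.sum_sub_distrib]
      exact Finset.sum_congr rfl fun t _ => by rw [← hxy t]; ring
    linarith
  -- on each finite horizon, δa is a convex combination of the c n
  have perT : ∀ T : ℕ, ∃ l ∈ stdSimplex ℝ (Fin N), ∀ t ≤ T, δa t = ∑ n, l n * c n t := by
    intro T
    by_contra hcon
    push_neg at hcon
    let Φ := phiL N (T + 1) c
    have hΦcont : Continuous Φ := Φ.continuous_of_finiteDimensional
    have himg_cvx : Convex ℝ (Φ '' stdSimplex ℝ (Fin N)) :=
      (convex_stdSimplex ℝ (Fin N)).linear_image Φ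
    have himg_cpt : IsCompact (Φ '' stdSimplex ℝ (Fin N)) :=
      (isCompact_stdSimplex ℝ (Fin N)).image hΦcont
    have hnotmem : (fun i : Fin (T + 1) => δa i.val) ∉ Φ '' stdSimplex ℝ (Fin N) := by
      rintro ⟨l, hl, hE⟩
      obtain ⟨t, ht, hne⟩ := hcon l hl
      apply hne
      have := congrFun hE ⟨t, by omega⟩
      simpa [Φ, phiL] using this.symm
    obtain ⟨f, u, hfu, hbig⟩ :=
      geometric_hahn_banach_point_closed himg_cvx himg_cpt.isClosed hnotmem
    -- the separating functional as a sequence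
    let z : ℕ → ℝ := fun t =>
      if h : t < T + 1 then
        f (fun j => if (⟨t, h⟩ : Fin (T + 1)) = j then 1 else 0) - (if t = 0 then u else 0)
      else 0
    have hzK : ∀ t, T + 1 ≤ t → z t = 0 := fun t ht => dif_neg (by omega)
    have hsum : ∀ d : ℕ → ℝ, ∑ t ∈ Finset.range (T + 1), d t * z t
        = f (fun i : Fin (T + 1) => d i.val) - d 0 * u := by
      intro d
      rw [aux_clm_eq_sum f (fun i : Fin (T + 1) => d i.val),
        ← Fin.sum_univ_eq_sum_range (fun t => d t * z t) (T + 1)]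
      have hz : ∀ i : Fin (T + 1), z i.val
          = f (fun j => if i = j then 1 else 0) - (if i.val = 0 then u else 0) := by
        intro i
        show dite _ _ _ = _
        rw [dif_pos i.isLt]
      have step1 : ∑ i : Fin (T + 1), d i.val * z i.val
          = ∑ i : Fin (T + 1), (d i.val * f (fun j => if i = j then 1 else 0)
            - d i.val * (if i.val = 0 then u else 0)) := by
        exact Finset.sum_congr rfl fun i _ => by rw [hz i]; ring
      rw [step1, Finset.sum_sub_distrib]
      congr 1
      rw [Fin.sum_univ_eq_sum_range (fun t => d t * (if t = 0 then u else 0)) (T + 1)]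
      rw [Finset.sum_eq_single_of_mem 0 (Finset.mem_range.2 (by omega))
        (fun b _ hb => by simp [hb])]
      simp
    have hpos : ∀ n, 0 ≤ ∑ t ∈ Finset.range (T + 1), c n t * z t := by
      intro n
      rw [hsum (c n), hc0 n]
      have hmem : (fun i : Fin (T + 1) => c n i.val) ∈ Φ '' stdSimplex ℝ (Fin N) := by
        refine ⟨Pi.single n 1, single_mem_stdSimplex ℝ n, ?_⟩
        funext t
        simp only [Φ, phiL, LinearMap.coe_mk, AddHom.coe_mk]
        rw [Finset.sum_eq_single_of_mem n (Finset.mem_univ n)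
          (fun b _ hb => by simp [Pi.single_apply, hb])]
        simp
      have := hbig _ hmem
      linarith
    have h0 := key (T + 1) z hzK hpos
    rw [hsum δa, hδ0] at h0
    linarith
  -- compactness: a single λ works for all horizons
  let SS : ℕ → Set (Fin N → ℝ) := fun T =>
    stdSimplex ℝ (Fin N) ∩ ⋂ t ∈ Set.Iic T, {l | δa t = ∑ n, l n * c n t}
  have hmemSS : ∀ T l, l ∈ SS T ↔ l ∈ stdSimplex ℝ (Fin N) ∧ ∀ t ≤ T, δa t = ∑ n, l n * c n t := by
    intro T l
    simp [SS, Set.mem_iInter]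
  have hsub : ∀ T, SS (T + 1) ⊆ SS T := by
    intro T l hl
    rw [hmemSS] at hl ⊢
    exact ⟨hl.1, fun t ht => hl.2 t (by omega)⟩
  have hne : ∀ T, (SS T).Nonempty := by
    intro T
    obtain ⟨l, hl, h⟩ := perT T
    exact ⟨l, (hmemSS T l).2 ⟨hl, h⟩⟩
  have hclosed : ∀ T, IsClosed (SS T) := by
    intro T
    refine (isClosed_stdSimplex ℝ (Fin N)).inter (isClosed_biInter fun t _ => ?_)
    exact isClosed_eq continuous_const
      (continuous_finset_sum _ fun n _ => (continuous_apply n).mul continuous_const)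
  have hcpt : IsCompact (SS 0) :=
    (isCompact_stdSimplex ℝ (Fin N)).of_isClosed_subset (hclosed 0) Set.inter_subset_left
  obtain ⟨l, hl⟩ := IsCompact.nonempty_iInter_of_sequence_nonempty_isCompact_isClosed
    SS hsub hne hcpt hclosed
  rw [Set.mem_iInter] at hl
  have hsimp : l ∈ stdSimplex ℝ (Fin N) := ((hmemSS 0 l).1 (hl 0)).1
  refine ⟨l, hsimp.1, hsimp.2, fun t => ?_⟩
  exact ((hmemSS t l).1 (hl t)).2 t le_rfl
end
end

section
/- Suppose F : Δ^N → Δ satisfies Assumption 1, G : Ω^N → Ω is any function (Assumption 2), and the unanimity condition (4) holds. Then F is dictatorial: there exists an individual n ∈ {1, …, N} such that F(P^1, …, P^N) = P^n for every (P^1, …, P^N) ∈ Δ^N. -/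
open MeasureTheory Set

noncomputable section

/-- `M(D, β)`: the elements of `D` with maximal discounted value at discount factor `β`. -/
def MaxSet (D : Set (ℕ → ℝ)) (β : ℝ) : Set (ℕ → ℝ) :=
  {x ∈ D | ∀ y ∈ D, dv β y ≤ dv β x}

/-- A tie-breaker: a nonatomic Borel probability measure on `[0,1]`. -/
structure TieBreaker where
  μ : Measure ↥(Icc (0:ℝ) 1)
  prob : IsProbabilityMeasure μ
  noAtoms : ∀ γ : ↥(Icc (0:ℝ) 1), μ {γ} = 0

/-- The random choice rule induced by `(P, υ)`:
`ρ(x, D) = Σ_m P_m · υ{γ : x ∈ M(M(D, β_m), γ)}`. -/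
def rcr {M : ℕ} (β P : Fin M → ℝ) (υ : TieBreaker) (x : ℕ → ℝ)
    (D : Finset (ℕ → ℝ)) : ℝ :=
  ∑ m, P m *
    (υ.μ {γ : ↥(Icc (0:ℝ) 1) | x ∈ MaxSet (MaxSet (↑D) (β m)) (γ : ℝ)}).toReal


section Aux


def Mem01 (x : ℝ) : Prop := 0 ≤ x ∧ x ≤ 1

section TwoD

variable (g : ℝ → ℝ → ℝ)

def SepAx : Prop :=
  ∀ p1 p2 q1 q2 r1 r2 : ℝ, Mem01 p1 → Mem01 p2 → Mem01 q1 → Mem01 q2 →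
    Mem01 r1 → Mem01 r2 →
    (r1 < min p1 q1 ∨ max p1 q1 < r1) → (r2 < min p2 q2 ∨ max p2 q2 < r2) →
    ¬(min (g p1 p2) (g q1 q2) ≤ g r1 r2 ∧ g r1 r2 ≤ max (g p1 p2) (g q1 q2))

def MemAx : Prop := ∀ x y, Mem01 x → Mem01 y → g x y = x ∨ g x y = y

def DiagAx : Prop := ∀ c, Mem01 c → g c c = c

variable {g}

lemma min_one_sub (A B : ℝ) : min (1-A) (1-B) = 1 - max A B := by
  rcases le_total A B with h | h
  · rw [max_eq_right h, min_eq_right (by linarith)]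
  · rw [max_eq_left h, min_eq_left (by linarith)]

lemma max_one_sub (A B : ℝ) : max (1-A) (1-B) = 1 - min A B := by
  rcases le_total A B with h | h
  · rw [min_eq_left h, max_eq_left (by linarith)]
  · rw [min_eq_right h, max_eq_right (by linarith)]

/-- one step: anchor (a,b) with value a, diagonal c, target (p,q) with q in the
value hull and both coords strictly separated. -/
lemma step1 (hsep : SepAx g) (hmem : MemAx g) (hdiag : DiagAx g)
    {a b c p q : ℝ} (ha : Mem01 a) (hb : Mem01 b) (hc : Mem01 c)
    (hp : Mem01 p) (hq : Mem01 q)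
    (hanc : g a b = a)
    (h1 : p < min a c ∨ max a c < p)
    (h2 : q < min b c ∨ max b c < q)
    (h3 : min a c ≤ q ∧ q ≤ max a c) : g p q = p := by
  have hs := hsep a b c c p q ha hb hc hc hp hq h1 h2
  rw [hanc, hdiag c hc] at hs
  rcases hmem p q hp hq with h | h
  · exact h
  · exfalso; apply hs; rw [h]; exact ⟨h3.1, h3.2⟩

/-- Main 2D propagation: a label-1 witness spreads everywhere. -/
lemma propagate (hsep : SepAx g) (hmem : MemAx g) (hdiag : DiagAx g)
    {a b : ℝ} (ha : Mem01 a) (hb : Mem01 b) (hab : a < b) (hanc : g a b = a) :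
    ∀ x y, Mem01 x → Mem01 y → x ≠ y → g x y = x := by
  obtain ⟨ha0, ha1⟩ := ha
  obtain ⟨hb0, hb1⟩ := hb
  -- L1 : anchors (1, q0) for q0 ∈ [a, b)
  have L1 : ∀ q0, a ≤ q0 → q0 < b → g 1 q0 = 1 := by
    intro q0 h1 h2
    have hq0 : Mem01 q0 := ⟨le_trans ha0 h1, le_trans h2.le hb1⟩
    have hcm : Mem01 ((q0+b)/2) := ⟨by linarith [hq0.1], by linarith⟩
    refine step1 hsep hmem hdiag (a := a) (b := b) (c := (q0+b)/2) (p := 1) (q := q0)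
      ⟨ha0, ha1⟩ ⟨hb0, hb1⟩ hcm ⟨zero_le_one, le_refl 1⟩ hq0 hanc ?_ ?_ ?_
    · right; rw [max_lt_iff]; exact ⟨by linarith, by linarith⟩
    · left; rw [lt_min_iff]; exact ⟨by linarith, by linarith⟩
    · exact ⟨min_le_iff.2 (Or.inl h1), le_max_iff.2 (Or.inr (by linarith))⟩
  -- L2 : the point (0,1) has label 1
  have L2 : g 0 1 = 0 := by
    have hq01 : a ≤ (a+b)/2 := by linarith
    have hq02 : (a+b)/2 < b := by linarith
    have hq0pos : 0 < (a+b)/2 := by linarith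
    have hanc1 : g 1 ((a+b)/2) = 1 := L1 _ hq01 hq02
    refine step1 hsep hmem hdiag (a := 1) (b := (a+b)/2) (c := (a+b)/4) (p := 0) (q := 1)
      ⟨zero_le_one, le_refl 1⟩ ⟨by linarith, by linarith⟩ ⟨by linarith, by linarith⟩
      ⟨le_refl 0, zero_le_one⟩ ⟨zero_le_one, le_refl 1⟩ hanc1 ?_ ?_ ?_
    · left; rw [lt_min_iff]; exact ⟨by linarith, by linarith⟩
    · right; rw [max_lt_iff]; exact ⟨by linarith, by linarith⟩
    · exact ⟨min_le_iff.2 (Or.inr (by linarith)), le_max_iff.2 (Or.inl (le_refl 1))⟩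
  -- L3 : all points strictly below the diagonal have label 1
  have L3 : ∀ x y, Mem01 x → Mem01 y → y < x → g x y = x := by
    intro x y hx hy hyx
    refine step1 hsep hmem hdiag (a := 0) (b := 1) (c := (y+x)/2) (p := x) (q := y)
      ⟨le_refl 0, zero_le_one⟩ ⟨zero_le_one, le_refl 1⟩
      ⟨by linarith [hy.1], by linarith [hx.2]⟩ hx hy L2 ?_ ?_ ?_
    · right; rw [max_lt_iff]; exact ⟨by linarith [hy.1], by linarith⟩
    · left; rw [lt_min_iff]; exact ⟨by linarith [hx.2], by linarith⟩
    · exact ⟨min_le_iff.2 (Or.inl hy.1), le_max_iff.2 (Or.inr (by linarith [hy.1]))⟩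
  -- L5 : all points strictly above the diagonal have label 1
  have L5 : ∀ x y, Mem01 x → Mem01 y → x < y → g x y = x := by
    intro x y hx hy hxy
    have hq0m : Mem01 ((x+y)/2) := ⟨by linarith [hx.1, hy.1], by linarith [hx.2, hy.2]⟩
    have h1 : x < (x+y)/2 := by linarith
    have h2 : (x+y)/2 < y := by linarith
    have hanc1 : g 1 ((x+y)/2) = 1 :=
      L3 1 _ ⟨zero_le_one, le_refl 1⟩ hq0m (lt_of_lt_of_le h2 hy.2)
    refine step1 hsep hmem hdiag (a := 1) (b := (x+y)/2) (c := (x + (x+y)/2)/2)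
      (p := x) (q := y) ⟨zero_le_one, le_refl 1⟩ hq0m
      ⟨by linarith [hx.1, hq0m.1], by linarith [hx.2, hq0m.2]⟩ hx hy hanc1 ?_ ?_ ?_
    · left; rw [lt_min_iff]; exact ⟨by linarith [hx.2, hq0m.2], by linarith⟩
    · right; rw [max_lt_iff]; exact ⟨by linarith, by linarith⟩
    · exact ⟨min_le_iff.2 (Or.inr (by linarith)), le_max_iff.2 (Or.inl hy.2)⟩
  intro x y hx hy hxy
  rcases lt_or_gt_of_ne hxy with h | h
  · exact L5 x y hx hy h
  · exact L3 x y hx hy h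

/-- The 2D dichotomy. -/
lemma dichotomy2D (hsep : SepAx g) (hmem : MemAx g) (hdiag : DiagAx g) :
    (∀ x y, Mem01 x → Mem01 y → g x y = x) ∨
    (∀ x y, Mem01 x → Mem01 y → g x y = y) := by
  have m0 : Mem01 0 := ⟨le_refl 0, zero_le_one⟩
  have m1 : Mem01 1 := ⟨zero_le_one, le_refl 1⟩
  rcases hmem 0 1 m0 m1 with h01 | h01
  · left
    intro x y hx hy
    rcases eq_or_ne x y with h | h
    · subst h; exact hdiag x hx
    · exact propagate hsep hmem hdiag m0 m1 zero_lt_one h01 x y hx hy h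
  · right
    set g' : ℝ → ℝ → ℝ := fun x y => 1 - g (1-y) (1-x) with hg'
    have mm : ∀ x : ℝ, Mem01 x → Mem01 (1 - x) :=
      fun x hx => ⟨by linarith [hx.2], by linarith [hx.1]⟩
    have hmem' : MemAx g' := by
      intro x y hx hy
      rcases hmem (1-y) (1-x) (mm y hy) (mm x hx) with h | h
      · right; simp only [hg']; rw [h]; ring
      · left; simp only [hg']; rw [h]; ring
    have hdiag' : DiagAx g' := by
      intro c hc
      simp only [hg']; rw [hdiag (1-c) (mm c hc)]; ring
    have hsep' : SepAx g' := by
      intro p1 p2 q1 q2 r1 r2 hp1 hp2 hq1 hq2 hr1 hr2 h1 h2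
      have hs := hsep (1-p2) (1-p1) (1-q2) (1-q1) (1-r2) (1-r1)
        (mm _ hp2) (mm _ hp1) (mm _ hq2) (mm _ hq1) (mm _ hr2) (mm _ hr1) ?_ ?_
      · intro ⟨hA, hB⟩
        apply hs
        simp only [hg'] at hA hB
        rw [min_one_sub] at hA
        rw [max_one_sub] at hB
        constructor <;> linarith
      · rcases h2 with h | h
        · right; rw [max_one_sub]; linarith
        · left; rw [min_one_sub]; linarith
      · rcases h1 with h | h
        · right; rw [max_one_sub]; linarith
        · left; rw [min_one_sub]; linarith
    have h01' : g' 0 1 = 0 := by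
      simp only [hg']
      rw [show (1:ℝ) - 1 = 0 by ring, show (1:ℝ) - 0 = 1 by ring, h01]
      ring
    have main : ∀ x y, Mem01 x → Mem01 y → x ≠ y → g' x y = x :=
      fun x y hx hy h => propagate hsep' hmem' hdiag' m0 m1 zero_lt_one h01' x y hx hy h
    intro x y hx hy
    rcases eq_or_ne x y with h | h
    · subst h; exact hdiag x hx
    · have h5 := main (1-y) (1-x) (mm y hy) (mm x hx) (by intro hc; apply h; linarith)
      simp only [hg'] at h5
      rw [show (1:ℝ) - (1-x) = x by ring, show (1:ℝ) - (1-y) = y by ring] at h5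
      linarith

end TwoD

section Unif

variable {p r : ℝ}

def unifMeas (p r : ℝ) : Measure ↥(Icc (0:ℝ) 1) :=
  Measure.map (projIcc (0:ℝ) 1 zero_le_one)
    ((ENNReal.ofReal (r - p))⁻¹ • volume.restrict (Icc p r))

lemma measurable_projIcc01 : Measurable (projIcc (0:ℝ) 1 zero_le_one) :=
  continuous_projIcc.measurable

lemma unifMeas_apply (hA : MeasurableSet A) :
    unifMeas p r A =
      (ENNReal.ofReal (r - p))⁻¹ * volume (Icc p r ∩ projIcc (0:ℝ) 1 zero_le_one ⁻¹' A) := by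
  rw [unifMeas, Measure.map_apply measurable_projIcc01 hA, Measure.smul_apply,
    Measure.restrict_apply' measurableSet_Icc, smul_eq_mul, Set.inter_comm]

lemma unifMeas_univ (hp : 0 < p) (hpr : p < r) (hr : r < 1) :
    unifMeas p r univ = 1 := by
  rw [unifMeas_apply MeasurableSet.univ, preimage_univ, inter_univ, Real.volume_Icc,
    ENNReal.inv_mul_cancel (by simp [ENNReal.ofReal_pos]; linarith) ENNReal.ofReal_ne_top]

lemma unifMeas_singleton (hp : 0 < p) (hpr : p < r) (hr : r < 1)
    (γ : ↥(Icc (0:ℝ) 1)) : unifMeas p r {γ} = 0 := by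
  rw [unifMeas_apply (measurableSet_singleton γ)]
  have hsub : Icc p r ∩ projIcc (0:ℝ) 1 zero_le_one ⁻¹' {γ} ⊆ {(γ:ℝ)} := by
    intro t ht
    obtain ⟨ht1, ht2⟩ := ht
    have htm : t ∈ Icc (0:ℝ) 1 := ⟨le_trans hp.le ht1.1, le_trans ht1.2 hr.le⟩
    have hproj : projIcc (0:ℝ) 1 zero_le_one t = ⟨t, htm⟩ := projIcc_of_mem _ htm
    simp only [mem_preimage, mem_singleton_iff, hproj] at ht2
    simp only [mem_singleton_iff, ← ht2]
  rw [measure_mono_null hsub Real.volume_singleton, mul_zero]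

lemma unifMeas_eq_one (hp : 0 < p) (hpr : p < r) (hr : r < 1)
    {A : Set ↥(Icc (0:ℝ) 1)} (hA : MeasurableSet A)
    (h : ∀ t (ht : t ∈ Icc (0:ℝ) 1), t ∈ Icc p r → (⟨t, ht⟩ : ↥(Icc (0:ℝ) 1)) ∈ A) :
    unifMeas p r A = 1 := by
  rw [unifMeas_apply hA]
  have : Icc p r ∩ projIcc (0:ℝ) 1 zero_le_one ⁻¹' A = Icc p r := by
    apply inter_eq_left.2
    intro t ht
    have htm : t ∈ Icc (0:ℝ) 1 := ⟨le_trans hp.le ht.1, le_trans ht.2 hr.le⟩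
    have hproj : projIcc (0:ℝ) 1 zero_le_one t = ⟨t, htm⟩ := projIcc_of_mem _ htm
    simp only [mem_preimage, hproj]
    exact h t htm ht
  rw [this, Real.volume_Icc,
    ENNReal.inv_mul_cancel (by simp [ENNReal.ofReal_pos]; linarith) ENNReal.ofReal_ne_top]

lemma unifMeas_eq_zero (hp : 0 < p) (hpr : p < r) (hr : r < 1)
    {A : Set ↥(Icc (0:ℝ) 1)} (hA : MeasurableSet A)
    (h : ∀ t (ht : t ∈ Icc (0:ℝ) 1), t ∈ Icc p r → (⟨t, ht⟩ : ↥(Icc (0:ℝ) 1)) ∉ A) :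
    unifMeas p r A = 0 := by
  rw [unifMeas_apply hA]
  have : Icc p r ∩ projIcc (0:ℝ) 1 zero_le_one ⁻¹' A = ∅ := by
    ext t
    simp only [mem_inter_iff, mem_preimage, mem_empty_iff_false, iff_false]
    rintro ⟨ht1, ht2⟩
    have htm : t ∈ Icc (0:ℝ) 1 := ⟨le_trans hp.le ht1.1, le_trans ht1.2 hr.le⟩
    rw [projIcc_of_mem _ htm] at ht2
    exact h t htm ht1 ht2
  rw [this, measure_empty, mul_zero]

end Unif

section Mix

def unifTB (p r : ℝ) (hp : 0 < p) (hpr : p < r) (hr : r < 1) : TieBreaker where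
  μ := unifMeas p r
  prob := ⟨unifMeas_univ hp hpr hr⟩
  noAtoms := unifMeas_singleton hp hpr hr

def mixTB (t u : ℝ) (ht0 : 0 ≤ t) (ht1 : t ≤ 1) (hu0 : 0 ≤ u) (hu1 : u ≤ 1)
    (T11 T10 T01 T00 : TieBreaker) : TieBreaker where
  μ := ENNReal.ofReal (t*u) • T11.μ + ENNReal.ofReal (t*(1-u)) • T10.μ +
       ENNReal.ofReal ((1-t)*u) • T01.μ + ENNReal.ofReal ((1-t)*(1-u)) • T00.μ
  prob := by
    constructor
    have h11 := T11.prob.measure_univ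
    have h10 := T10.prob.measure_univ
    have h01 := T01.prob.measure_univ
    have h00 := T00.prob.measure_univ
    simp only [Measure.add_apply, Measure.smul_apply, h11, h10, h01, h00, smul_eq_mul,
      mul_one]
    have n1 : 0 ≤ t*u := mul_nonneg ht0 hu0
    have n2 : 0 ≤ t*(1-u) := mul_nonneg ht0 (by linarith)
    have n3 : 0 ≤ (1-t)*u := mul_nonneg (by linarith) hu0
    have n4 : 0 ≤ (1-t)*(1-u) := mul_nonneg (by linarith) (by linarith)
    rw [← ENNReal.ofReal_add n1 n2, ← ENNReal.ofReal_add (add_nonneg n1 n2) n3,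
      ← ENNReal.ofReal_add (add_nonneg (add_nonneg n1 n2) n3) n4]
    rw [show t*u + t*(1-u) + (1-t)*u + (1-t)*(1-u) = 1 by ring, ENNReal.ofReal_one]
  noAtoms := by
    intro γ
    simp only [Measure.add_apply, Measure.smul_apply, T11.noAtoms γ, T10.noAtoms γ,
      T01.noAtoms γ, T00.noAtoms γ, smul_eq_mul, mul_zero, add_zero]

lemma mixTB_apply (t u : ℝ) (ht0 : 0 ≤ t) (ht1 : t ≤ 1) (hu0 : 0 ≤ u) (hu1 : u ≤ 1)
    (T11 T10 T01 T00 : TieBreaker) (A : Set ↥(Icc (0:ℝ) 1)) :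
    (mixTB t u ht0 ht1 hu0 hu1 T11 T10 T01 T00).μ A =
      ENNReal.ofReal (t*u) * T11.μ A + ENNReal.ofReal (t*(1-u)) * T10.μ A +
      ENNReal.ofReal ((1-t)*u) * T01.μ A + ENNReal.ofReal ((1-t)*(1-u)) * T00.μ A := by
  simp only [mixTB, Measure.add_apply, Measure.smul_apply, smul_eq_mul]

lemma mixTB_val1 (t u : ℝ) (ht0 : 0 ≤ t) (ht1 : t ≤ 1) (hu0 : 0 ≤ u) (hu1 : u ≤ 1)
    (T11 T10 T01 T00 : TieBreaker) (A : Set ↥(Icc (0:ℝ) 1))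
    (h11 : T11.μ A = 1) (h10 : T10.μ A = 1) (h01 : T01.μ A = 0) (h00 : T00.μ A = 0) :
    ((mixTB t u ht0 ht1 hu0 hu1 T11 T10 T01 T00).μ A).toReal = t := by
  rw [mixTB_apply, h11, h10, h01, h00]
  simp only [mul_one, mul_zero, add_zero]
  rw [← ENNReal.ofReal_add (mul_nonneg ht0 hu0) (mul_nonneg ht0 (by linarith)),
    show t*u + t*(1-u) = t by ring, ENNReal.toReal_ofReal ht0]

lemma mixTB_val2 (t u : ℝ) (ht0 : 0 ≤ t) (ht1 : t ≤ 1) (hu0 : 0 ≤ u) (hu1 : u ≤ 1)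
    (T11 T10 T01 T00 : TieBreaker) (A : Set ↥(Icc (0:ℝ) 1))
    (h11 : T11.μ A = 1) (h10 : T10.μ A = 0) (h01 : T01.μ A = 1) (h00 : T00.μ A = 0) :
    ((mixTB t u ht0 ht1 hu0 hu1 T11 T10 T01 T00).μ A).toReal = u := by
  rw [mixTB_apply, h11, h10, h01, h00]
  simp only [mul_one, mul_zero, add_zero, zero_add]
  rw [← ENNReal.ofReal_add (mul_nonneg ht0 hu0) (mul_nonneg (by linarith) hu0),
    show t*u + (1-t)*u = u by ring, ENNReal.toReal_ofReal hu0]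

end Mix

end Aux

section LemC

lemma mem01_of_simplex {M : ℕ} {P : Fin M → ℝ} (hP : P ∈ stdSimplex ℝ (Fin M)) (μ : Fin M) :
    Mem01 (P μ) := by
  refine ⟨hP.1 μ, ?_⟩
  rw [← hP.2]
  exact Finset.single_le_sum (fun i _ => hP.1 i) (Finset.mem_univ μ)

lemma dv_eq_sum {x : ℕ → ℝ} {K : ℕ} (h : ∀ k, K ≤ k → x k = 0) (γ : ℝ) :
    dv γ x = ∑ k ∈ Finset.range K, γ ^ k * x k := by
  apply tsum_eq_sum
  intro k hk
  rw [h k (le_of_not_gt (by simpa using hk)), mul_zero]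

lemma dv_sub_eval {x y : ℕ → ℝ} {q : Polynomial ℝ} {K : ℕ}
    (hx : ∀ k, K ≤ k → x k = 0) (hy : ∀ k, K ≤ k → y k = 0) (hq : q.natDegree < K)
    (hdiff : ∀ k, x k - y k = q.coeff k) (γ : ℝ) : dv γ x - dv γ y = q.eval γ := by
  rw [dv_eq_sum hx, dv_eq_sum hy, ← Finset.sum_sub_distrib,
    Polynomial.eval_eq_sum_range' hq]
  apply Finset.sum_congr rfl
  intro k _
  rw [← mul_sub, hdiff]
  ring

set_option maxHeartbeats 2000000 in
lemma lemC {N M : ℕ} (β : Fin M → ℝ) (hβmem : ∀ m, β m ∈ Ioo (0:ℝ) 1) (hβ : StrictAnti β)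
    (F : (Fin N → Fin M → ℝ) → Fin M → ℝ)
    (hFmaps : ∀ P : Fin N → Fin M → ℝ, (∀ n, P n ∈ stdSimplex ℝ (Fin M)) →
      F P ∈ stdSimplex ℝ (Fin M))
    (G : (Fin N → TieBreaker) → TieBreaker)
    (unan : ∀ P : Fin N → Fin M → ℝ, (∀ n, P n ∈ stdSimplex ℝ (Fin M)) →
      ∀ (υ : Fin N → TieBreaker) (D : Finset (ℕ → ℝ)),
        D.Nonempty → (∀ y ∈ D, IsProject y) → ∀ x ∈ D,
        ((∀ n, 1/2 ≤ rcr β (P n) (υ n) x D) → 1/2 ≤ rcr β (F P) (G υ) x D) ∧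
        ((∀ n, rcr β (P n) (υ n) x D < 1/2) → rcr β (F P) (G υ) x D < 1/2))
    (m : Fin M) (t u : Fin N → ℝ)
    (ht : ∀ n, Mem01 (t n)) (hu : ∀ n, Mem01 (u n)) :
    ∃ s s' : ℝ, Mem01 s ∧ Mem01 s' ∧
      ∀ P : Fin N → Fin M → ℝ, (∀ n, P n ∈ stdSimplex ℝ (Fin M)) →
        ((∀ n, 1/2 ≤ P n m * t n + (1 - P n m) * u n) →
          1/2 ≤ F P m * s + (1 - F P m) * s') ∧
        ((∀ n, P n m * t n + (1 - P n m) * u n < 1/2) →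
          F P m * s + (1 - F P m) * s' < 1/2) := by
  classical
  have hM0 : 0 < M := m.pos
  set Lst : Fin M := ⟨M - 1, by omega⟩ with hlast
  set ε : ℝ := β Lst with hεdef
  have hε0 : 0 < ε := (hβmem Lst).1
  have hε1 : ε < 1 := (hβmem Lst).2
  have hβm1 : β m < 1 := (hβmem m).2
  have hεle : ∀ μ, ε ≤ β μ := by
    intro μ
    rcases eq_or_lt_of_le (show μ ≤ Lst by
      rw [Fin.le_def]; simp only [hlast]; omega) with h | h
    · rw [h]
    · exact (hβ h).le
  -- the two polynomials
  set q1 : Polynomial ℝ := (Polynomial.X - Polynomial.C (β m))^2 *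
      ((Polynomial.X - Polynomial.C (ε/5)) * ((Polynomial.X - Polynomial.C (7*ε/20)) *
        (Polynomial.X - Polynomial.C (ε/2)))) with hq1def
  set q2 : Polynomial ℝ := (∏ μ ∈ Finset.univ.erase m, (Polynomial.X - Polynomial.C (β μ))^2) *
      ((Polynomial.X - Polynomial.C (7*ε/20)) * (Polynomial.C 2 - Polynomial.X)) with hq2def
  have hq1eval : ∀ γ : ℝ, q1.eval γ =
      (γ - β m)^2 * ((γ - ε/5) * ((γ - 7*ε/20) * (γ - ε/2))) := by
    intro γ
    simp [hq1def]
  have hq2eval : ∀ γ : ℝ, q2.eval γ =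
      (∏ μ ∈ Finset.univ.erase m, (γ - β μ)^2) * ((γ - 7*ε/20) * (2 - γ)) := by
    intro γ
    simp [hq2def, Polynomial.eval_prod]
  -- sign facts for q1
  have hq1_at_m : q1.eval (β m) = 0 := by rw [hq1eval]; simp
  have hq1_at_ne : ∀ μ, μ ≠ m → 0 < q1.eval (β μ) := by
    intro μ hμ
    rw [hq1eval]
    have h1 : β μ ≠ β m := fun h => hμ (hβ.injective h)
    have h2 : ε ≤ β μ := hεle μ
    have hsq : 0 < (β μ - β m)^2 := sq_pos_of_ne_zero (sub_ne_zero.2 h1)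
    exact mul_pos hsq (mul_pos (by linarith) (mul_pos (by linarith) (by linarith)))
  have hq1_I11 : ∀ γ : ℝ, 11*ε/20 ≤ γ → γ ≤ 3*ε/5 → 0 ≤ q1.eval γ := by
    intro γ h1 h2
    rw [hq1eval]
    exact mul_nonneg (sq_nonneg _)
      (mul_pos (by linarith) (mul_pos (by linarith) (by linarith))).le
  have hq1_I10 : ∀ γ : ℝ, ε/4 ≤ γ → γ ≤ 3*ε/10 → 0 ≤ q1.eval γ := by
    intro γ h1 h2
    rw [hq1eval]
    exact mul_nonneg (sq_nonneg _)
      (mul_pos (by linarith) (mul_pos_of_neg_of_neg (by linarith) (by linarith))).le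
  have hq1_I01 : ∀ γ : ℝ, 2*ε/5 ≤ γ → γ ≤ 9*ε/20 → q1.eval γ < 0 := by
    intro γ h1 h2
    rw [hq1eval]
    have hεm : ε ≤ β m := hεle m
    have hsq : 0 < (γ - β m)^2 := by
      refine sq_pos_of_ne_zero (sub_ne_zero.2 ?_)
      intro h; rw [h] at h2; linarith
    exact mul_neg_of_pos_of_neg hsq
      (mul_neg_of_pos_of_neg (by linarith) (mul_neg_of_pos_of_neg (by linarith) (by linarith)))
  have hq1_I00 : ∀ γ : ℝ, ε/10 ≤ γ → γ ≤ 3*ε/20 → q1.eval γ < 0 := by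
    intro γ h1 h2
    rw [hq1eval]
    have hεm : ε ≤ β m := hεle m
    have hsq : 0 < (γ - β m)^2 := by
      refine sq_pos_of_ne_zero (sub_ne_zero.2 ?_)
      intro h; rw [h] at h2; linarith
    exact mul_neg_of_pos_of_neg hsq
      (mul_neg_of_neg_of_pos (by linarith)
        (mul_pos_of_neg_of_neg (by linarith) (by linarith)))
  have hq1_at_0 : q1.eval 0 < 0 := by
    rw [hq1eval]
    have hεm : ε ≤ β m := hεle m
    have hsq : 0 < (0 - β m)^2 := by
      refine sq_pos_of_ne_zero (sub_ne_zero.2 ?_)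
      intro h
      have : β m = 0 := by linarith
      linarith
    exact mul_neg_of_pos_of_neg hsq
      (mul_neg_of_neg_of_pos (by linarith)
        (mul_pos_of_neg_of_neg (by linarith) (by linarith)))
  -- sign facts for q2
  have hprodpos : ∀ γ : ℝ, (∀ μ, μ ≠ m → γ ≠ β μ) →
      0 < ∏ μ ∈ Finset.univ.erase m, (γ - β μ)^2 := by
    intro γ h
    apply Finset.prod_pos
    intro μ hμ
    exact sq_pos_of_ne_zero (sub_ne_zero.2 (h μ (Finset.ne_of_mem_erase hμ)))
  have hq2_at_m : 0 < q2.eval (β m) := by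
    rw [hq2eval]
    have hεm : ε ≤ β m := hεle m
    refine mul_pos (hprodpos _ ?_) (mul_pos (by linarith) (by linarith))
    intro μ hμ h
    exact hμ (hβ.injective h).symm
  have hq2_at_ne : ∀ μ, μ ≠ m → q2.eval (β μ) = 0 := by
    intro μ hμ
    rw [hq2eval]
    rw [Finset.prod_eq_zero (Finset.mem_erase.2 ⟨hμ, Finset.mem_univ μ⟩) (by simp)]
    ring
  have hsmall_ne : ∀ γ : ℝ, γ < ε → (∀ μ, μ ≠ m → γ ≠ β μ) := by
    intro γ hγ μ hμ h
    have := hεle μ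
    rw [h] at hγ
    linarith
  have hq2_I11 : ∀ γ : ℝ, 11*ε/20 ≤ γ → γ ≤ 3*ε/5 → 0 ≤ q2.eval γ := by
    intro γ h1 h2
    rw [hq2eval]
    exact mul_nonneg (Finset.prod_nonneg fun μ _ => sq_nonneg _)
      (mul_pos (by linarith) (by linarith)).le
  have hq2_I01 : ∀ γ : ℝ, 2*ε/5 ≤ γ → γ ≤ 9*ε/20 → 0 ≤ q2.eval γ := by
    intro γ h1 h2
    rw [hq2eval]
    exact mul_nonneg (Finset.prod_nonneg fun μ _ => sq_nonneg _)
      (mul_pos (by linarith) (by linarith)).le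
  have hq2_I10 : ∀ γ : ℝ, ε/4 ≤ γ → γ ≤ 3*ε/10 → q2.eval γ < 0 := by
    intro γ h1 h2
    rw [hq2eval]
    exact mul_neg_of_pos_of_neg (hprodpos _ (hsmall_ne _ (by linarith)))
      (mul_neg_of_neg_of_pos (by linarith) (by linarith))
  have hq2_I00 : ∀ γ : ℝ, ε/10 ≤ γ → γ ≤ 3*ε/20 → q2.eval γ < 0 := by
    intro γ h1 h2
    rw [hq2eval]
    exact mul_neg_of_pos_of_neg (hprodpos _ (hsmall_ne _ (by linarith)))
      (mul_neg_of_neg_of_pos (by linarith) (by linarith))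
  have hq2_at_0 : q2.eval 0 < 0 := by
    rw [hq2eval]
    exact mul_neg_of_pos_of_neg (hprodpos _ (hsmall_ne _ (by linarith)))
      (mul_neg_of_neg_of_pos (by linarith) (by linarith))
  -- the three projects
  set K : ℕ := max q1.natDegree q2.natDegree + 1 with hKdef
  set x : ℕ → ℝ := fun k => max (q1.coeff k) 0 + max (q2.coeff k) 0 with hxdef
  set y : ℕ → ℝ := fun k => max (-q1.coeff k) 0 + max (q2.coeff k) 0 with hydef
  set z : ℕ → ℝ := fun k => max (q1.coeff k) 0 + max (-q2.coeff k) 0 with hzdef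
  have hdq1 : q1.natDegree < K := Nat.lt_succ_of_le (le_max_left _ _)
  have hdq2 : q2.natDegree < K := Nat.lt_succ_of_le (le_max_right _ _)
  have hcoeff1 : ∀ k, K ≤ k → q1.coeff k = 0 := fun k hk =>
    Polynomial.coeff_eq_zero_of_natDegree_lt (lt_of_lt_of_le hdq1 hk)
  have hcoeff2 : ∀ k, K ≤ k → q2.coeff k = 0 := fun k hk =>
    Polynomial.coeff_eq_zero_of_natDegree_lt (lt_of_lt_of_le hdq2 hk)
  have hxK : ∀ k, K ≤ k → x k = 0 := by
    intro k hk; simp [hxdef, hcoeff1 k hk, hcoeff2 k hk]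
  have hyK : ∀ k, K ≤ k → y k = 0 := by
    intro k hk; simp [hydef, hcoeff1 k hk, hcoeff2 k hk]
  have hzK : ∀ k, K ≤ k → z k = 0 := by
    intro k hk; simp [hzdef, hcoeff1 k hk, hcoeff2 k hk]
  have hdv1 : ∀ γ : ℝ, dv γ x - dv γ y = q1.eval γ := by
    intro γ
    refine dv_sub_eval hxK hyK hdq1 (fun k => ?_) γ
    simp only [hxdef, hydef]
    have := max_zero_sub_max_neg_zero_eq_self (q1.coeff k)
    linarith
  have hdv2 : ∀ γ : ℝ, dv γ x - dv γ z = q2.eval γ := by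
    intro γ
    refine dv_sub_eval hxK hzK hdq2 (fun k => ?_) γ
    simp only [hxdef, hzdef]
    have := max_zero_sub_max_neg_zero_eq_self (q2.coeff k)
    linarith
  -- distinctness
  have hxy : x ≠ y := by
    intro h
    have h1 := hdv1 0
    rw [h, sub_self] at h1
    linarith
  have hxz : x ≠ z := by
    intro h
    have h1 := hdv2 0
    rw [h, sub_self] at h1
    linarith
  have hyz : y ≠ z := by
    intro h
    have h1 := hdv1 (β m)
    have h2 := hdv2 (β m)
    rw [hq1_at_m] at h1
    rw [h] at h1
    linarith
  -- the menu
  set D : Finset (ℕ → ℝ) := {x, y, z} with hDdef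
  have hxD : x ∈ D := by rw [hDdef]; exact Finset.mem_insert_self _ _
  have hDne : D.Nonempty := ⟨x, hxD⟩
  have hDcoe : (↑D : Set (ℕ → ℝ)) = {x, y, z} := by
    rw [hDdef]; simp only [Finset.coe_insert, Finset.coe_singleton]
  have hmkproj : ∀ f : ℕ → ℝ, (∀ k, K ≤ k → f k = 0) → (∀ k, 0 ≤ f k) → IsProject f := by
    intro f h1 h2
    refine ⟨Set.Finite.subset (Finset.range K).finite_toSet ?_, h2⟩
    intro k hk
    simp only [Function.mem_support] at hk
    simp only [Finset.coe_range, Set.mem_Iio]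
    by_contra h3
    exact hk (h1 k (le_of_not_gt h3))
  have hproj : ∀ w ∈ D, IsProject w := by
    intro w hw
    have hw' : w = x ∨ w = y ∨ w = z := by
      simp only [hDdef, Finset.mem_insert, Finset.mem_singleton] at hw; exact hw
    rcases hw' with rfl | rfl | rfl
    · exact hmkproj _ hxK (fun k => add_nonneg (le_max_right _ 0) (le_max_right _ 0))
    · exact hmkproj _ hyK (fun k => add_nonneg (le_max_right _ 0) (le_max_right _ 0))
    · exact hmkproj _ hzK (fun k => add_nonneg (le_max_right _ 0) (le_max_right _ 0))
  -- first-level maximizations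
  have hdvxy_m : dv (β m) x = dv (β m) y := by
    have h1 := hdv1 (β m); rw [hq1_at_m] at h1; linarith
  have hdvzx_m : dv (β m) z < dv (β m) x := by
    have h2 := hdv2 (β m); linarith [hq2_at_m]
  have hMSm : MaxSet (↑D) (β m) = {x, y} := by
    rw [hDcoe]
    ext w
    simp only [MaxSet, Set.mem_setOf_eq, Set.mem_insert_iff, Set.mem_singleton_iff]
    constructor
    · rintro ⟨hw, hall⟩
      rcases hw with rfl | rfl | rfl
      · exact Or.inl rfl
      · exact Or.inr rfl
      · exact absurd (hall x (Or.inl rfl)) (by linarith)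
    · rintro (rfl | rfl)
      · refine ⟨Or.inl rfl, ?_⟩
        rintro v (rfl | rfl | rfl)
        · exact le_refl _
        · linarith
        · linarith
      · refine ⟨Or.inr (Or.inl rfl), ?_⟩
        rintro v (rfl | rfl | rfl)
        · linarith
        · exact le_refl _
        · linarith
  have hMSne : ∀ μ, μ ≠ m → MaxSet (↑D) (β μ) = {x, z} := by
    intro μ hμ
    have e1 := hdv1 (β μ)
    have e2 := hdv2 (β μ)
    have hy_lt : dv (β μ) y < dv (β μ) x := by linarith [hq1_at_ne μ hμ]
    have hz_eq : dv (β μ) z = dv (β μ) x := by rw [hq2_at_ne μ hμ] at e2; linarith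
    rw [hDcoe]
    ext w
    simp only [MaxSet, Set.mem_setOf_eq, Set.mem_insert_iff, Set.mem_singleton_iff]
    constructor
    · rintro ⟨hw, hall⟩
      rcases hw with rfl | rfl | rfl
      · exact Or.inl rfl
      · exact absurd (hall x (Or.inl rfl)) (by linarith)
      · exact Or.inr rfl
    · rintro (rfl | rfl)
      · refine ⟨Or.inl rfl, ?_⟩
        rintro v (rfl | rfl | rfl)
        · exact le_refl _
        · linarith
        · linarith
      · refine ⟨Or.inr (Or.inr rfl), ?_⟩
        rintro v (rfl | rfl | rfl)
        · linarith
        · linarith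
        · exact le_refl _
  -- the second-level sets
  set A1 : Set ↥(Icc (0:ℝ) 1) := {γ | 0 ≤ q1.eval (γ:ℝ)} with hA1def
  set A2 : Set ↥(Icc (0:ℝ) 1) := {γ | 0 ≤ q2.eval (γ:ℝ)} with hA2def
  have hA1meas : MeasurableSet A1 := by
    have h : A1 = (fun γ : ↥(Icc (0:ℝ) 1) => q1.eval (γ:ℝ)) ⁻¹' (Ici 0) := rfl
    rw [h]
    exact ((q1.continuous).comp continuous_subtype_val).measurable measurableSet_Ici
  have hA2meas : MeasurableSet A2 := by
    have h : A2 = (fun γ : ↥(Icc (0:ℝ) 1) => q2.eval (γ:ℝ)) ⁻¹' (Ici 0) := rfl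
    rw [h]
    exact ((q2.continuous).comp continuous_subtype_val).measurable measurableSet_Ici
  have hSm : {γ : ↥(Icc (0:ℝ) 1) | x ∈ MaxSet (MaxSet (↑D) (β m)) (γ:ℝ)} = A1 := by
    ext γ
    simp only [Set.mem_setOf_eq, hMSm]
    simp only [MaxSet, Set.mem_setOf_eq, Set.mem_insert_iff, Set.mem_singleton_iff, hA1def]
    constructor
    · rintro ⟨-, hall⟩
      have h1 := hall y (Or.inr rfl)
      have hd := hdv1 (γ:ℝ)
      linarith
    · intro h
      refine ⟨Or.inl trivial, ?_⟩
      rintro v (rfl | rfl)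
      · exact le_refl _
      · have hd := hdv1 (γ:ℝ); linarith
  have hSne : ∀ μ, μ ≠ m →
      {γ : ↥(Icc (0:ℝ) 1) | x ∈ MaxSet (MaxSet (↑D) (β μ)) (γ:ℝ)} = A2 := by
    intro μ hμ
    ext γ
    simp only [Set.mem_setOf_eq, hMSne μ hμ]
    simp only [MaxSet, Set.mem_setOf_eq, Set.mem_insert_iff, Set.mem_singleton_iff, hA2def]
    constructor
    · rintro ⟨-, hall⟩
      have h1 := hall z (Or.inr rfl)
      have hd := hdv2 (γ:ℝ)
      linarith
    · intro h
      refine ⟨Or.inl trivial, ?_⟩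
      rintro v (rfl | rfl)
      · exact le_refl _
      · have hd := hdv2 (γ:ℝ); linarith
  -- the tie-breakers
  set U11 : TieBreaker := unifTB (11*ε/20) (3*ε/5) (by linarith) (by linarith) (by linarith)
    with hU11def
  set U10 : TieBreaker := unifTB (ε/4) (3*ε/10) (by linarith) (by linarith) (by linarith)
    with hU10def
  set U01 : TieBreaker := unifTB (2*ε/5) (9*ε/20) (by linarith) (by linarith) (by linarith)
    with hU01def
  set U00 : TieBreaker := unifTB (ε/10) (3*ε/20) (by linarith) (by linarith) (by linarith)
    with hU00def
  have hU11A1 : U11.μ A1 = 1 := by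
    refine unifMeas_eq_one (by linarith) (by linarith) (by linarith) hA1meas ?_
    intro γ hγ h2
    exact hq1_I11 γ h2.1 h2.2
  have hU10A1 : U10.μ A1 = 1 := by
    refine unifMeas_eq_one (by linarith) (by linarith) (by linarith) hA1meas ?_
    intro γ hγ h2
    exact hq1_I10 γ h2.1 h2.2
  have hU01A1 : U01.μ A1 = 0 := by
    refine unifMeas_eq_zero (by linarith) (by linarith) (by linarith) hA1meas ?_
    intro γ hγ h2 hmem
    have := hq1_I01 γ h2.1 h2.2
    simp only [hA1def, Set.mem_setOf_eq] at hmem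
    linarith
  have hU00A1 : U00.μ A1 = 0 := by
    refine unifMeas_eq_zero (by linarith) (by linarith) (by linarith) hA1meas ?_
    intro γ hγ h2 hmem
    have := hq1_I00 γ h2.1 h2.2
    simp only [hA1def, Set.mem_setOf_eq] at hmem
    linarith
  have hU11A2 : U11.μ A2 = 1 := by
    refine unifMeas_eq_one (by linarith) (by linarith) (by linarith) hA2meas ?_
    intro γ hγ h2
    exact hq2_I11 γ h2.1 h2.2
  have hU10A2 : U10.μ A2 = 0 := by
    refine unifMeas_eq_zero (by linarith) (by linarith) (by linarith) hA2meas ?_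
    intro γ hγ h2 hmem
    have := hq2_I10 γ h2.1 h2.2
    simp only [hA2def, Set.mem_setOf_eq] at hmem
    linarith
  have hU01A2 : U01.μ A2 = 1 := by
    refine unifMeas_eq_one (by linarith) (by linarith) (by linarith) hA2meas ?_
    intro γ hγ h2
    exact hq2_I01 γ h2.1 h2.2
  have hU00A2 : U00.μ A2 = 0 := by
    refine unifMeas_eq_zero (by linarith) (by linarith) (by linarith) hA2meas ?_
    intro γ hγ h2 hmem
    have := hq2_I00 γ h2.1 h2.2
    simp only [hA2def, Set.mem_setOf_eq] at hmem
    linarith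
  set υ : Fin N → TieBreaker := fun n =>
    mixTB (t n) (u n) (ht n).1 (ht n).2 (hu n).1 (hu n).2 U11 U10 U01 U00 with hυdef
  have hυA1 : ∀ n, (((υ n).μ) A1).toReal = t n := by
    intro n
    exact mixTB_val1 _ _ _ _ _ _ _ _ _ _ _ hU11A1 hU10A1 hU01A1 hU00A1
  have hυA2 : ∀ n, (((υ n).μ) A2).toReal = u n := by
    intro n
    exact mixTB_val2 _ _ _ _ _ _ _ _ _ _ _ hU11A2 hU10A2 hU01A2 hU00A2
  -- the rcr formula
  have hrcr : ∀ (Q : Fin M → ℝ), Q ∈ stdSimplex ℝ (Fin M) → ∀ T : TieBreaker,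
      rcr β Q T x D = Q m * (T.μ A1).toReal + (1 - Q m) * (T.μ A2).toReal := by
    intro Q hQ T
    have hQm : Q m + ∑ μ ∈ Finset.univ.erase m, Q μ = 1 := by
      rw [Finset.add_sum_erase _ _ (Finset.mem_univ m)]
      exact hQ.2
    simp only [rcr]
    rw [← Finset.add_sum_erase _ _ (Finset.mem_univ m), hSm]
    have hcong : ∀ μ ∈ Finset.univ.erase m,
        Q μ * (T.μ {γ : ↥(Icc (0:ℝ) 1) | x ∈ MaxSet (MaxSet (↑D) (β μ)) (γ:ℝ)}).toReal
          = Q μ * (T.μ A2).toReal := by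
      intro μ hμ
      rw [hSne μ (Finset.ne_of_mem_erase hμ)]
    rw [Finset.sum_congr rfl hcong, ← Finset.sum_mul]
    have h2 : ∑ μ ∈ Finset.univ.erase m, Q μ = 1 - Q m := by linarith
    rw [h2]
  -- conclusion
  haveI hGP := (G υ).prob
  have hle1 : ∀ B : Set ↥(Icc (0:ℝ) 1), ((G υ).μ B).toReal ≤ 1 := by
    intro B
    have h := prob_le_one (μ := (G υ).μ) (s := B)
    have := ENNReal.toReal_mono ENNReal.one_ne_top h
    simpa using this
  refine ⟨((G υ).μ A1).toReal, ((G υ).μ A2).toReal,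
    ⟨ENNReal.toReal_nonneg, hle1 A1⟩, ⟨ENNReal.toReal_nonneg, hle1 A2⟩, ?_⟩
  intro P hP
  have happ := unan P hP υ D hDne hproj x hxD
  have hFP := hFmaps P hP
  constructor
  · intro hyp
    have h1 : ∀ n, 1/2 ≤ rcr β (P n) (υ n) x D := by
      intro n
      rw [hrcr (P n) (hP n) (υ n), hυA1 n, hυA2 n]
      exact hyp n
    have h2 := happ.1 h1
    rw [hrcr (F P) hFP (G υ)] at h2
    exact h2
  · intro hyp
    have h1 : ∀ n, rcr β (P n) (υ n) x D < 1/2 := by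
      intro n
      rw [hrcr (P n) (hP n) (υ n), hυA1 n, hυA2 n]
      exact hyp n
    have h2 := happ.2 h1
    rw [hrcr (F P) hFP (G υ)] at h2
    exact h2

end LemC
section Tools

variable {N M : ℕ} (β : Fin M → ℝ)

def vec2 {M : ℕ} (m m' : Fin M) (v : ℝ) : Fin M → ℝ :=
  fun μ => if μ = m then v else if μ = m' then 1 - v else 0

lemma vec2_mem {M : ℕ} {m m' : Fin M} (hmm : m' ≠ m) {v : ℝ} (hv : Mem01 v) :
    vec2 m m' v ∈ stdSimplex ℝ (Fin M) := by
  classical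
  constructor
  · intro μ
    simp only [vec2]
    split_ifs <;> linarith [hv.1, hv.2]
  · rw [← Finset.add_sum_erase _ _ (Finset.mem_univ m)]
    have h1 : vec2 m m' v m = v := by simp [vec2]
    have h2 : ∀ μ ∈ Finset.univ.erase m, vec2 m m' v μ =
        if μ = m' then 1 - v else 0 := by
      intro μ hμ
      simp only [vec2, if_neg (Finset.ne_of_mem_erase hμ)]
    rw [h1, Finset.sum_congr rfl h2, Finset.sum_ite_eq' (Finset.univ.erase m) m'
      (fun _ => 1 - v), if_pos (Finset.mem_erase.2 ⟨hmm, Finset.mem_univ m'⟩)]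
    ring

lemma vec2_at_m {M : ℕ} (m m' : Fin M) (v : ℝ) : vec2 m m' v m = v := by simp [vec2]

lemma toolSep {N M : ℕ} (β : Fin M → ℝ) (hβmem : ∀ m, β m ∈ Ioo (0:ℝ) 1) (hβ : StrictAnti β)
    (F : (Fin N → Fin M → ℝ) → Fin M → ℝ)
    (hFmaps : ∀ P : Fin N → Fin M → ℝ, (∀ n, P n ∈ stdSimplex ℝ (Fin M)) →
      F P ∈ stdSimplex ℝ (Fin M))
    (G : (Fin N → TieBreaker) → TieBreaker)
    (unan : ∀ P : Fin N → Fin M → ℝ, (∀ n, P n ∈ stdSimplex ℝ (Fin M)) →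
      ∀ (υ : Fin N → TieBreaker) (D : Finset (ℕ → ℝ)),
        D.Nonempty → (∀ y ∈ D, IsProject y) → ∀ x ∈ D,
        ((∀ n, 1/2 ≤ rcr β (P n) (υ n) x D) → 1/2 ≤ rcr β (F P) (G υ) x D) ∧
        ((∀ n, rcr β (P n) (υ n) x D < 1/2) → rcr β (F P) (G υ) x D < 1/2))
    (m : Fin M) (P Q R : Fin N → Fin M → ℝ)
    (hP : ∀ n, P n ∈ stdSimplex ℝ (Fin M)) (hQ : ∀ n, Q n ∈ stdSimplex ℝ (Fin M))
    (hR : ∀ n, R n ∈ stdSimplex ℝ (Fin M))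
    (hcond : ∀ n, R n m < min (P n m) (Q n m) ∨ max (P n m) (Q n m) < R n m) :
    ¬(min (F P m) (F Q m) ≤ F R m ∧ F R m ≤ max (F P m) (F Q m)) := by
  classical
  set θ : Fin N → ℝ := fun n => if R n m < min (P n m) (Q n m)
    then (R n m + min (P n m) (Q n m))/2 else (R n m + max (P n m) (Q n m))/2 with hθdef
  set t : Fin N → ℝ := fun n => if R n m < min (P n m) (Q n m)
    then 1/2 + (1 - θ n)/2 else θ n / 2 with htdef
  set u : Fin N → ℝ := fun n => if R n m < min (P n m) (Q n m)
    then 1/2 - θ n / 2 else (θ n + 1)/2 with hudef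
  have hmain : ∀ n, Mem01 (t n) ∧ Mem01 (u n) ∧
      (1/2 ≤ P n m * t n + (1 - P n m) * u n) ∧
      (1/2 ≤ Q n m * t n + (1 - Q n m) * u n) ∧
      (R n m * t n + (1 - R n m) * u n < 1/2) := by
    intro n
    have hPb := mem01_of_simplex (hP n) m
    have hQb := mem01_of_simplex (hQ n) m
    have hRb := mem01_of_simplex (hR n) m
    have hminP := min_le_left (P n m) (Q n m)
    have hminQ := min_le_right (P n m) (Q n m)
    have hmaxP := le_max_left (P n m) (Q n m)
    have hmaxQ := le_max_right (P n m) (Q n m)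
    have hmin0 : 0 ≤ min (P n m) (Q n m) := le_min hPb.1 hQb.1
    have hmax1 : max (P n m) (Q n m) ≤ 1 := max_le hPb.2 hQb.2
    rcases hcond n with hcase | hcase
    · have hθv : θ n = (R n m + min (P n m) (Q n m))/2 := by
        simp only [hθdef]; rw [if_pos hcase]
      have htv : t n = 1/2 + (1 - θ n)/2 := by
        simp only [htdef]; rw [if_pos hcase]
      have huv : u n = 1/2 - θ n / 2 := by
        simp only [hudef]; rw [if_pos hcase]
      have hθ0 : 0 ≤ θ n := by rw [hθv]; linarith [hRb.1]
      have hθ1 : θ n ≤ 1 := by rw [hθv]; linarith [hRb.2, le_trans hminP hPb.2]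
      have hθlt : θ n < min (P n m) (Q n m) := by rw [hθv]; linarith
      have hθgt : R n m < θ n := by rw [hθv]; linarith
      have hval : ∀ b : ℝ, b * t n + (1 - b) * u n = 1/2 + (b - θ n)/2 := by
        intro b; rw [htv, huv]; ring
      refine ⟨⟨by rw [htv]; linarith, by rw [htv]; linarith⟩,
        ⟨by rw [huv]; linarith, by rw [huv]; linarith⟩, ?_, ?_, ?_⟩
      · rw [hval]; linarith
      · rw [hval]; linarith
      · rw [hval]; linarith
    · have hncase : ¬(R n m < min (P n m) (Q n m)) := by
        push_neg
        exact le_trans (le_trans hminP hmaxP) hcase.le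
      have hθv : θ n = (R n m + max (P n m) (Q n m))/2 := by
        simp only [hθdef]; rw [if_neg hncase]
      have htv : t n = θ n / 2 := by
        simp only [htdef]; rw [if_neg hncase]
      have huv : u n = (θ n + 1)/2 := by
        simp only [hudef]; rw [if_neg hncase]
      have hθ0 : 0 ≤ θ n := by rw [hθv]; linarith [hRb.1, le_trans hPb.1 hmaxP]
      have hθ1 : θ n ≤ 1 := by rw [hθv]; linarith [hRb.2]
      have hθgt : max (P n m) (Q n m) < θ n := by rw [hθv]; linarith
      have hθlt : θ n < R n m := by rw [hθv]; linarith
      have hval : ∀ b : ℝ, b * t n + (1 - b) * u n = 1/2 + (θ n - b)/2 := by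
        intro b; rw [htv, huv]; ring
      refine ⟨⟨by rw [htv]; linarith, by rw [htv]; linarith⟩,
        ⟨by rw [huv]; linarith, by rw [huv]; linarith⟩, ?_, ?_, ?_⟩
      · rw [hval]; linarith
      · rw [hval]; linarith
      · rw [hval]; linarith
  obtain ⟨s, s', hs, hs', himp⟩ := lemC β hβmem hβ F hFmaps G unan m t u
    (fun n => (hmain n).1) (fun n => (hmain n).2.1)
  have hP2 : 1/2 ≤ F P m * s + (1 - F P m) * s' :=
    (himp P hP).1 (fun n => (hmain n).2.2.1)
  have hQ2 : 1/2 ≤ F Q m * s + (1 - F Q m) * s' :=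
    (himp Q hQ).1 (fun n => (hmain n).2.2.2.1)
  have hR2 : F R m * s + (1 - F R m) * s' < 1/2 :=
    (himp R hR).2 (fun n => (hmain n).2.2.2.2)
  rintro ⟨hA, hB⟩
  rcases le_total (F P m) (F Q m) with h | h
  · rw [min_eq_left h] at hA
    rw [max_eq_right h] at hB
    rcases le_total s' s with hss | hss
    · have hprod : 0 ≤ (s - s') * (F R m - F P m) :=
        mul_nonneg (by linarith) (by linarith)
      nlinarith
    · have hprod : 0 ≤ (s' - s) * (F Q m - F R m) :=
        mul_nonneg (by linarith) (by linarith)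
      nlinarith
  · rw [min_eq_right h] at hA
    rw [max_eq_left h] at hB
    rcases le_total s' s with hss | hss
    · have hprod : 0 ≤ (s - s') * (F R m - F Q m) :=
        mul_nonneg (by linarith) (by linarith)
      nlinarith
    · have hprod : 0 ≤ (s' - s) * (F P m - F R m) :=
        mul_nonneg (by linarith) (by linarith)
      nlinarith

lemma claimA {N M : ℕ} (β : Fin M → ℝ) (hβmem : ∀ m, β m ∈ Ioo (0:ℝ) 1) (hβ : StrictAnti β)
    (F : (Fin N → Fin M → ℝ) → Fin M → ℝ)
    (hFmaps : ∀ P : Fin N → Fin M → ℝ, (∀ n, P n ∈ stdSimplex ℝ (Fin M)) →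
      F P ∈ stdSimplex ℝ (Fin M))
    (hFconst : ∀ Q ∈ stdSimplex ℝ (Fin M), F (fun _ => Q) = Q)
    (G : (Fin N → TieBreaker) → TieBreaker)
    (unan : ∀ P : Fin N → Fin M → ℝ, (∀ n, P n ∈ stdSimplex ℝ (Fin M)) →
      ∀ (υ : Fin N → TieBreaker) (D : Finset (ℕ → ℝ)),
        D.Nonempty → (∀ y ∈ D, IsProject y) → ∀ x ∈ D,
        ((∀ n, 1/2 ≤ rcr β (P n) (υ n) x D) → 1/2 ≤ rcr β (F P) (G υ) x D) ∧
        ((∀ n, rcr β (P n) (υ n) x D < 1/2) → rcr β (F P) (G υ) x D < 1/2))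
    (m m' : Fin M) (hmm : m' ≠ m) (P : Fin N → Fin M → ℝ)
    (hP : ∀ n, P n ∈ stdSimplex ℝ (Fin M)) : ∃ n, F P m = P n m := by
  by_contra hcon
  push_neg at hcon
  have hvmem : Mem01 (F P m) := mem01_of_simplex (hFmaps P hP) m
  have hRmem := vec2_mem (M := M) hmm hvmem
  have hFR : F (fun _ => vec2 m m' (F P m)) m = F P m := by
    rw [hFconst _ hRmem, vec2_at_m]
  have hsep := toolSep β hβmem hβ F hFmaps G unan m P P (fun _ => vec2 m m' (F P m))
    hP hP (fun _ => hRmem) ?_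
  · exact hsep ⟨by rw [hFR, min_self], by rw [hFR, max_self]⟩
  · intro n
    rw [min_self, max_self]
    have hh : (fun (_ : Fin N) => vec2 m m' (F P m)) n m = F P m := vec2_at_m m m' _
    rw [vec2_at_m]
    exact (hcon n).lt_or_gt

end Tools
section Dict

def prof {N M : ℕ} (m m' : Fin M) (b : Fin N → ℝ) : Fin N → Fin M → ℝ :=
  fun n => vec2 m m' (b n)

lemma prof_at_m {N M : ℕ} (m m' : Fin M) (b : Fin N → ℝ) (n : Fin N) :
    prof m m' b n m = b n := vec2_at_m m m' (b n)

lemma dict_coord {N M : ℕ} (β : Fin M → ℝ) (hβmem : ∀ m, β m ∈ Ioo (0:ℝ) 1)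
    (hβ : StrictAnti β) (hM : 2 ≤ M)
    (F : (Fin N → Fin M → ℝ) → Fin M → ℝ)
    (hFmaps : ∀ P : Fin N → Fin M → ℝ, (∀ n, P n ∈ stdSimplex ℝ (Fin M)) →
      F P ∈ stdSimplex ℝ (Fin M))
    (hFconst : ∀ Q ∈ stdSimplex ℝ (Fin M), F (fun _ => Q) = Q)
    (G : (Fin N → TieBreaker) → TieBreaker)
    (unan : ∀ P : Fin N → Fin M → ℝ, (∀ n, P n ∈ stdSimplex ℝ (Fin M)) →
      ∀ (υ : Fin N → TieBreaker) (D : Finset (ℕ → ℝ)),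
        D.Nonempty → (∀ y ∈ D, IsProject y) → ∀ x ∈ D,
        ((∀ n, 1/2 ≤ rcr β (P n) (υ n) x D) → 1/2 ≤ rcr β (F P) (G υ) x D) ∧
        ((∀ n, rcr β (P n) (υ n) x D < 1/2) → rcr β (F P) (G υ) x D < 1/2))
    (m : Fin M) :
    ∃ n0 : Fin N, ∀ P : Fin N → Fin M → ℝ, (∀ k, P k ∈ stdSimplex ℝ (Fin M)) →
      F P m = P n0 m := by
  classical
  obtain ⟨m', hm'⟩ : ∃ m' : Fin M, m' ≠ m := by
    rcases eq_or_ne m ⟨0, by omega⟩ with h | h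
    · refine ⟨⟨1, by omega⟩, ?_⟩
      rw [h]
      simp [Fin.ext_iff]
    · exact ⟨⟨0, by omega⟩, fun hc => h hc.symm⟩
  have hprofmem : ∀ b : Fin N → ℝ, (∀ n, Mem01 (b n)) →
      ∀ n, prof m m' b n ∈ stdSimplex ℝ (Fin M) :=
    fun b hb n => vec2_mem hm' (hb n)
  have hprofm : ∀ (b : Fin N → ℝ) (n : Fin N), prof m m' b n m = b n :=
    fun b n => vec2_at_m m m' (b n)
  set g : Fin N → ℝ → ℝ → ℝ :=
    fun n0 p q => F (prof m m' (fun k => if k = n0 then p else q)) m with hgdef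
  have hmem2 : ∀ b : Fin N → ℝ, (∀ n, Mem01 (b n)) → ∃ k, F (prof m m' b) m = b k := by
    intro b hb
    obtain ⟨k, hk⟩ := claimA β hβmem hβ F hFmaps hFconst G unan m m' hm' (prof m m' b)
      (hprofmem b hb)
    exact ⟨k, by rw [hk, hprofm]⟩
  have hmemAx : ∀ n0, MemAx (g n0) := by
    intro n0 x' y' hx hy
    obtain ⟨k, hk⟩ := hmem2 (fun k => if k = n0 then x' else y')
      (fun k => by show Mem01 (if k = n0 then x' else y'); split_ifs; exacts [hx, hy])
    rcases eq_or_ne k n0 with rfl | hkn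
    · left; rw [if_pos rfl] at hk; exact hk
    · right; rw [if_neg hkn] at hk; exact hk
  have hdiagAx : ∀ n0, DiagAx (g n0) := by
    intro n0 c hc
    show F (prof m m' (fun k => if k = n0 then c else c)) m = c
    have hb : (fun k : Fin N => if k = n0 then c else c) = fun _ => c := by
      funext k; exact ite_self c
    rw [hb]
    have hpc : prof m m' (fun _ => c) = fun (_ : Fin N) => vec2 m m' c := rfl
    rw [hpc, hFconst _ (vec2_mem hm' hc), vec2_at_m]
  have hsepAx : ∀ n0, SepAx (g n0) := by
    intro n0 p1 p2 q1 q2 r1 r2 hp1 hp2 hq1 hq2 hr1 hr2 h1 h2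
    have hsep := toolSep β hβmem hβ F hFmaps G unan m
      (prof m m' (fun k => if k = n0 then p1 else p2))
      (prof m m' (fun k => if k = n0 then q1 else q2))
      (prof m m' (fun k => if k = n0 then r1 else r2))
      (hprofmem _ fun k => by show Mem01 (if k = n0 then p1 else p2); split_ifs; exacts [hp1, hp2])
      (hprofmem _ fun k => by show Mem01 (if k = n0 then q1 else q2); split_ifs; exacts [hq1, hq2])
      (hprofmem _ fun k => by show Mem01 (if k = n0 then r1 else r2); split_ifs; exacts [hr1, hr2]) ?_
    · exact hsep
    · intro k
      rw [hprofm, hprofm, hprofm]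
      rcases eq_or_ne k n0 with rfl | hkn
      · simp only [if_pos rfl]; exact h1
      · simp only [if_neg hkn]; exact h2
  by_cases hex : ∃ n0 : Fin N, ∀ x' y', Mem01 x' → Mem01 y' → g n0 x' y' = x'
  · obtain ⟨n0, hg⟩ := hex
    refine ⟨n0, ?_⟩
    intro P hP
    by_contra hne
    have hfin : (Set.range fun k => P k m).Finite := Set.finite_range _
    have hinf : (Icc (0:ℝ) 1).Infinite := Set.Icc_infinite (by norm_num)
    obtain ⟨w, hw⟩ := (hinf.diff hfin).nonempty
    obtain ⟨hwI, hwS⟩ := hw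
    have hwmem : Mem01 w := ⟨hwI.1, hwI.2⟩
    have hwne : ∀ k, w ≠ P k m := by
      intro k hc
      exact hwS ⟨k, hc.symm⟩
    have hvmem : Mem01 (F P m) := mem01_of_simplex (hFmaps P hP) m
    have hanc : g n0 (F P m) w = F P m := hg _ _ hvmem hwmem
    have hsep := toolSep β hβmem hβ F hFmaps G unan m
      (prof m m' (fun k => if k = n0 then F P m else w))
      (prof m m' (fun k => if k = n0 then F P m else w)) P
      (hprofmem _ fun k => by
        show Mem01 (if k = n0 then F P m else w); split_ifs; exacts [hvmem, hwmem])
      (hprofmem _ fun k => by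
        show Mem01 (if k = n0 then F P m else w); split_ifs; exacts [hvmem, hwmem])
      hP ?_
    · refine hsep ⟨?_, ?_⟩
      · rw [min_self]; exact le_of_eq hanc
      · rw [max_self]; exact ge_of_eq hanc
    · intro k
      rw [hprofm, min_self, max_self]
      rcases eq_or_ne k n0 with rfl | hkn
      · simp only [if_pos rfl]
        exact (show P k m ≠ F P m from fun h => hne h.symm).lt_or_gt
      · simp only [if_neg hkn]
        exact ((hwne k).symm).lt_or_gt
  · have hall : ∀ n0, ∀ x' y', Mem01 x' → Mem01 y' → g n0 x' y' = y' := by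
      intro n0
      rcases dichotomy2D (hsepAx n0) (hmemAx n0) (hdiagAx n0) with h | h
      · exact absurd ⟨n0, h⟩ hex
      · exact h
    exfalso
    set d : ℝ := 3*((N:ℝ)+2) with hddef
    have hd0 : 0 < d := by rw [hddef]; positivity
    set Rb : Fin N → ℝ := fun n => (3*((n:ℕ):ℝ)+3)/d with hRbdef
    have hcast : ∀ n : Fin N, ((n:ℕ):ℝ) ≤ (N:ℝ) - 1 := by
      intro n
      have h1 : (n:ℕ) + 1 ≤ N := n.isLt
      have h2 : ((n:ℕ):ℝ) + 1 ≤ (N:ℝ) := by exact_mod_cast h1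
      linarith
    have hRbmem : ∀ n, Mem01 (Rb n) := by
      intro n
      constructor
      · apply div_nonneg _ hd0.le
        positivity
      · rw [div_le_one hd0, hddef]
        have := hcast n
        linarith
    obtain ⟨n3, hn3⟩ := hmem2 Rb hRbmem
    set w1 : ℝ := (3*((n3:ℕ):ℝ)+2)/d with hw1def
    set w2 : ℝ := (3*((n3:ℕ):ℝ)+4)/d with hw2def
    have hn3c := hcast n3
    have hn30 : (0:ℝ) ≤ ((n3:ℕ):ℝ) := Nat.cast_nonneg _
    have hw1mem : Mem01 w1 := by
      constructor
      · apply div_nonneg _ hd0.le; linarith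
      · rw [div_le_one hd0, hddef]; linarith
    have hw2mem : Mem01 w2 := by
      constructor
      · apply div_nonneg _ hd0.le; linarith
      · rw [div_le_one hd0, hddef]; linarith
    have hA1 : g n3 0 w1 = w1 := hall n3 0 w1 ⟨le_refl 0, zero_le_one⟩ hw1mem
    have hA2 : g n3 0 w2 = w2 := hall n3 0 w2 ⟨le_refl 0, zero_le_one⟩ hw2mem
    have hdiv : ∀ a b : ℝ, a < b → a/d < b/d := fun a b h => by
      apply div_lt_div_of_pos_right h hd0
    have hsep := toolSep β hβmem hβ F hFmaps G unan m
      (prof m m' (fun k => if k = n3 then 0 else w1))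
      (prof m m' (fun k => if k = n3 then 0 else w2))
      (prof m m' Rb)
      (hprofmem _ fun k => by
        show Mem01 (if k = n3 then 0 else w1); split_ifs
        exacts [⟨le_refl 0, zero_le_one⟩, hw1mem])
      (hprofmem _ fun k => by
        show Mem01 (if k = n3 then 0 else w2); split_ifs
        exacts [⟨le_refl 0, zero_le_one⟩, hw2mem])
      (hprofmem Rb hRbmem) ?_
    · apply hsep
      have e1 : F (prof m m' (fun k => if k = n3 then 0 else w1)) m = w1 := hA1
      have e2 : F (prof m m' (fun k => if k = n3 then 0 else w2)) m = w2 := hA2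
      rw [e1, e2, hn3]
      have hlt1 : w1 ≤ Rb n3 := by
        rw [hw1def, hRbdef]
        exact (hdiv _ _ (by linarith)).le
      have hlt2 : Rb n3 ≤ w2 := by
        rw [hw2def, hRbdef]
        exact (hdiv _ _ (by linarith)).le
      have hw12 : w1 ≤ w2 := by
        rw [hw1def, hw2def]
        exact (hdiv _ _ (by linarith)).le
      exact ⟨by rw [min_eq_left hw12]; exact hlt1, by rw [max_eq_right hw12]; exact hlt2⟩
    · intro k
      rw [hprofm, hprofm, hprofm]
      rcases eq_or_ne k n3 with rfl | hkn
      · right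
        have h0 : (0:ℝ) < Rb k := by
          rw [hRbdef]
          apply div_pos _ hd0
          positivity
        simpa using h0
      · simp only [if_neg hkn]
        have hkval : ((k:ℕ):ℝ) ≠ ((n3:ℕ):ℝ) := by
          intro hc
          exact hkn (Fin.ext (by exact_mod_cast hc))
        rcases lt_or_gt_of_ne hkval with h | h
        · left
          rw [lt_min_iff]
          have hk1 : ((k:ℕ):ℝ) + 1 ≤ ((n3:ℕ):ℝ) := by
            have : (k:ℕ) < (n3:ℕ) := by exact_mod_cast h
            exact_mod_cast Nat.succ_le_of_lt this
          constructor
          · rw [hRbdef, hw1def]; exact hdiv _ _ (by linarith)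
          · rw [hRbdef, hw2def]; exact hdiv _ _ (by linarith)
        · right
          rw [max_lt_iff]
          have hk1 : ((n3:ℕ):ℝ) + 1 ≤ ((k:ℕ):ℝ) := by
            have : (n3:ℕ) < (k:ℕ) := by exact_mod_cast h
            exact_mod_cast Nat.succ_le_of_lt this
          constructor
          · rw [hRbdef, hw1def]; exact hdiv _ _ (by linarith)
          · rw [hRbdef, hw2def]; exact hdiv _ _ (by linarith)

end Dict
theorem stmt1 (N M : ℕ) (hN : 1 ≤ N) (hM : 2 ≤ M)
    (β : Fin M → ℝ) (hβmem : ∀ m, β m ∈ Ioo (0:ℝ) 1) (hβ : StrictAnti β)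
    (F : (Fin N → Fin M → ℝ) → (Fin M → ℝ))
    -- Assumption 1
    (hFmaps : ∀ P : Fin N → Fin M → ℝ, (∀ n, P n ∈ stdSimplex ℝ (Fin M)) →
      F P ∈ stdSimplex ℝ (Fin M))
    (hFconst : ∀ Q ∈ stdSimplex ℝ (Fin M), F (fun _ => Q) = Q)
    -- Assumption 2
    (G : (Fin N → TieBreaker) → TieBreaker)
    -- Unanimity condition (4)
    (unan : ∀ P : Fin N → Fin M → ℝ, (∀ n, P n ∈ stdSimplex ℝ (Fin M)) →
      ∀ (υ : Fin N → TieBreaker) (D : Finset (ℕ → ℝ)),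
        D.Nonempty → (∀ y ∈ D, IsProject y) → ∀ x ∈ D,
        ((∀ n, 1/2 ≤ rcr β (P n) (υ n) x D) → 1/2 ≤ rcr β (F P) (G υ) x D) ∧
        ((∀ n, rcr β (P n) (υ n) x D < 1/2) → rcr β (F P) (G υ) x D < 1/2)) :
    -- F is dictatorial
    ∃ n : Fin N, ∀ P : Fin N → Fin M → ℝ,
      (∀ k, P k ∈ stdSimplex ℝ (Fin M)) → F P = P n := by
  classical
  have hdict : ∀ m : Fin M, ∃ n0 : Fin N, ∀ P : Fin N → Fin M → ℝ,
      (∀ k, P k ∈ stdSimplex ℝ (Fin M)) → F P m = P n0 m :=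
    fun m => dict_coord β hβmem hβ hM F hFmaps hFconst G unan m
  choose nd hnd using hdict
  set m0 : Fin M := ⟨0, by omega⟩ with hm0def
  have hdelta : ∀ a : Fin M, (fun μ => if μ = a then (1:ℝ) else 0) ∈ stdSimplex ℝ (Fin M) := by
    intro a
    constructor
    · intro μ; dsimp only; split_ifs <;> norm_num
    · rw [Finset.sum_ite_eq' Finset.univ a (fun _ => (1:ℝ)), if_pos (Finset.mem_univ a)]
  have hall : ∀ m : Fin M, nd m = nd m0 := by
    intro m
    by_contra hne
    rcases eq_or_ne m m0 with rfl | hm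
    · exact hne rfl
    · set Pp : Fin N → Fin M → ℝ := fun k =>
        if k = nd m then (fun μ => if μ = m then (1:ℝ) else 0)
        else (fun μ => if μ = m0 then (1:ℝ) else 0) with hPpdef
      have hPp : ∀ k, Pp k ∈ stdSimplex ℝ (Fin M) := by
        intro k
        simp only [hPpdef]
        split_ifs <;> exact hdelta _
      have h1 : F Pp m = 1 := by
        rw [hnd m Pp hPp]
        simp only [hPpdef, if_pos rfl]
        simp
      have h2 : F Pp m0 = 1 := by
        rw [hnd m0 Pp hPp]
        have hne0 : nd m0 ≠ nd m := fun h => hne h.symm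
        simp only [hPpdef, if_neg hne0]
        simp
      have hs := hFmaps Pp hPp
      have hpair : F Pp m + F Pp m0 ≤ ∑ μ, F Pp μ := by
        rw [← Finset.sum_pair hm]
        apply Finset.sum_le_sum_of_subset_of_nonneg
        · intro μ _; exact Finset.mem_univ μ
        · intro μ _ _; exact hs.1 μ
      rw [hs.2, h1, h2] at hpair
      linarith
  refine ⟨nd m0, ?_⟩
  intro P hP
  funext μ
  rw [hnd μ P hP, hall μ]
end
end

section
/- Suppose F : Δ^N → Δ satisfies Assumption 1, G : Ω^N → Ω is any function (Assumption 2), and the unanimity condition (4) holds. Then for any two profiles (P^1, …, P^N) and (Q^1, …, Q^N) in Δ^N with P^n ≠ Q^n for every n = 1, …, N, one has F(P^1, …, P^N) ≠ F(Q^1, …, Q^N). -/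
open MeasureTheory Set

noncomputable section

namespace S4
open Polynomial


/-- uniform probability measure on `Ioo a c` viewed inside `[0,1]` -/
def unif (a c : ℝ) : Measure ↥(Icc (0:ℝ) 1) :=
  Measure.comap Subtype.val ((ENNReal.ofReal (c - a))⁻¹ • volume.restrict (Ioo a c))

lemma unif_apply (a c : ℝ) (S : Set ↥(Icc (0:ℝ) 1)) :
    unif a c S = (ENNReal.ofReal (c - a))⁻¹ * volume (Subtype.val '' S ∩ Ioo a c) := by
  rw [unif, (MeasurableEmbedding.subtype_coe measurableSet_Icc).comap_apply,
    Measure.smul_apply, Measure.restrict_apply']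
  · rfl
  · exact measurableSet_Ioo

lemma unif_prob {a c : ℝ} (h : a < c) (h0 : 0 ≤ a) (h1 : c ≤ 1) :
    IsProbabilityMeasure (unif a c) := by
  constructor
  rw [unif_apply]
  have : Subtype.val '' (univ : Set ↥(Icc (0:ℝ) 1)) ∩ Ioo a c = Ioo a c := by
    rw [Subtype.coe_image_univ]
    exact inter_eq_self_of_subset_right (fun x hx => ⟨le_trans h0 hx.1.le, le_trans hx.2.le h1⟩)
  rw [this, Real.volume_Ioo]
  exact ENNReal.inv_mul_cancel (by simp [h]) ENNReal.ofReal_ne_top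

lemma unif_noAtoms (a c : ℝ) (γ : ↥(Icc (0:ℝ) 1)) : unif a c {γ} = 0 := by
  rw [unif_apply]
  have h2 : volume (Subtype.val '' {γ} ∩ Ioo a c) = 0 := by
    apply measure_mono_null (t := {(γ:ℝ)})
    · rintro x ⟨hx, -⟩; simpa using hx
    · exact Real.volume_singleton
  rw [h2, mul_zero]

lemma unif_eq_one {a c : ℝ} (h : a < c) (h0 : 0 ≤ a) (h1 : c ≤ 1)
    {S : Set ↥(Icc (0:ℝ) 1)} (hS : ∀ x : ℝ, x ∈ Ioo a c → ∀ hx : x ∈ Icc (0:ℝ) 1, (⟨x, hx⟩ : ↥(Icc (0:ℝ) 1)) ∈ S) :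
    unif a c S = 1 := by
  have hP := unif_prob h h0 h1
  have hle : unif a c S ≤ 1 := prob_le_one
  have : unif a c S = unif a c univ := by
    apply le_antisymm (measure_mono (subset_univ _))
    rw [unif_apply, unif_apply]
    refine mul_le_mul_right (measure_mono ?_) _
    rintro x ⟨⟨y, -, rfl⟩, hx⟩
    exact ⟨mem_image_of_mem Subtype.val (hS y hx y.2), hx⟩
  rw [this]
  exact hP.measure_univ

lemma unif_eq_zero {a c : ℝ} {S : Set ↥(Icc (0:ℝ) 1)}
    (hS : ∀ x : ℝ, x ∈ Ioo a c → ∀ hx : x ∈ Icc (0:ℝ) 1, (⟨x, hx⟩ : ↥(Icc (0:ℝ) 1)) ∉ S) :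
    unif a c S = 0 := by
  rw [unif_apply]
  have : Subtype.val '' S ∩ Ioo a c = ∅ := by
    ext x; simp only [mem_inter_iff, mem_image, mem_empty_iff_false, iff_false, not_and]
    rintro ⟨⟨y, hy⟩, hyS, rfl⟩ hx
    exact hS _ hx hy hyS
  simp [this]


variable (Mn : ℕ) (b : ℝ)

def rr : ℝ := b / (8 * (Mn + 3))
def ll (m : ℕ) : ℝ := 8 * rr Mn b * (m+1) - 2 * rr Mn b
def uu (m : ℕ) : ℝ := 8 * rr Mn b * (m+1) + 2 * rr Mn b
def n1 : ℝ := 8 * rr Mn b * Mn + 4 * rr Mn b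
def n2 : ℝ := 8 * rr Mn b * (Mn+1) + 4 * rr Mn b
def n3 : ℝ := 8 * rr Mn b * (Mn+2) + 4 * rr Mn b
/-- center of interval `i`, `i = 0,…,Mn+1` -/
def cen (i : ℕ) : ℝ := 8 * rr Mn b * (i+1)

def qp (βm : ℝ) (m : ℕ) : ℝ[X] :=
  (X - C βm)^2 * ((X - C (ll Mn b m)) * ((X - C (uu Mn b m)) *
    ((X - C (n1 Mn b)) * ((X - C (n2 Mn b)) * (X - C (n3 Mn b))))))

lemma qp_eval (βm : ℝ) (m : ℕ) (γ : ℝ) :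
    (qp Mn b βm m).eval γ = (γ - βm)^2 * ((γ - ll Mn b m) * ((γ - uu Mn b m) *
      ((γ - n1 Mn b) * ((γ - n2 Mn b) * (γ - n3 Mn b))))) := by
  simp [qp]

lemma rr_pos (hb : 0 < b) : 0 < rr Mn b := by
  have : (0:ℝ) < 8 * (Mn + 3) := by positivity
  exact div_pos hb this

lemma b_eq : 8 * rr Mn b * (Mn + 3) = b := by
  have : (8:ℝ) * (Mn + 3) ≠ 0 := by positivity
  unfold rr
  field_simp

/-- sign on own interval -/
lemma sign_own (hb : 0 < b) (βm : ℝ) (hβm : b ≤ βm) (m : ℕ) (hm : m < Mn)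
    (γ : ℝ) (hγ : γ ∈ Ioo (cen Mn b m - rr Mn b) (cen Mn b m + rr Mn b)) :
    0 < (qp Mn b βm m).eval γ := by
  have hr := rr_pos Mn b hb
  have hbe := b_eq Mn b
  set s := rr Mn b with hs
  obtain ⟨h1, h2⟩ := hγ
  have hmM : (m:ℝ) + 1 ≤ Mn := by exact_mod_cast hm
  have hA : s * ((m:ℝ) + 1) ≤ s * Mn := mul_le_mul_of_nonneg_left hmM hr.le
  rw [qp_eval]
  simp only [cen] at h1 h2
  have g2 : 0 < γ - ll Mn b m := by simp only [ll, ← hs]; linarith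
  have g3 : γ - uu Mn b m < 0 := by simp only [uu, ← hs]; linarith
  have g4 : γ - n1 Mn b < 0 := by simp only [n1, ← hs]; linarith
  have g5 : γ - n2 Mn b < 0 := by simp only [n2, ← hs]; linarith
  have g6 : γ - n3 Mn b < 0 := by simp only [n3, ← hs]; linarith
  have g1 : 0 < (γ - βm)^2 := by
    have h9 : γ < βm := by linarith
    have : γ - βm ≠ 0 := ne_of_lt (by linarith)
    positivity
  have := mul_pos_of_neg_of_neg g5 g6
  have := mul_neg_of_neg_of_pos g4 this
  have := mul_pos_of_neg_of_neg g3 this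
  have := mul_pos g2 this
  exact mul_pos g1 this

/-- sign on another individual interval -/
lemma sign_other (hb : 0 < b) (βm : ℝ) (hβm : b ≤ βm) (m k : ℕ) (hm : m < Mn)
    (hk : k < Mn) (hne : k ≠ m)
    (γ : ℝ) (hγ : γ ∈ Ioo (cen Mn b k - rr Mn b) (cen Mn b k + rr Mn b)) :
    (qp Mn b βm m).eval γ < 0 := by
  have hr := rr_pos Mn b hb
  have hbe := b_eq Mn b
  set s := rr Mn b with hs
  obtain ⟨h1, h2⟩ := hγ
  have hkM : (k:ℝ) + 1 ≤ Mn := by exact_mod_cast hk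
  have hmM : (m:ℝ) + 1 ≤ Mn := by exact_mod_cast hm
  have hA : s * ((m:ℝ) + 1) ≤ s * Mn := mul_le_mul_of_nonneg_left hmM hr.le
  have hB : s * ((k:ℝ) + 1) ≤ s * Mn := mul_le_mul_of_nonneg_left hkM hr.le
  rw [qp_eval]
  simp only [cen] at h1 h2
  have g4 : γ - n1 Mn b < 0 := by simp only [n1, ← hs]; linarith
  have g5 : γ - n2 Mn b < 0 := by simp only [n2, ← hs]; linarith
  have g6 : γ - n3 Mn b < 0 := by simp only [n3, ← hs]; linarith
  have g1 : 0 < (γ - βm)^2 := by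
    have h9 : γ < βm := by linarith
    have : γ - βm ≠ 0 := ne_of_lt (by linarith)
    positivity
  have h56 := mul_pos_of_neg_of_neg g5 g6
  have h456 := mul_neg_of_neg_of_pos g4 h56
  rcases lt_or_gt_of_ne hne with hkm | hkm
  · -- k < m : γ below the interval around cen m
    have hkm' : (k:ℝ) + 1 ≤ m := by exact_mod_cast hkm
    have hC : s * ((k:ℝ) + 1) ≤ s * m := mul_le_mul_of_nonneg_left hkm' hr.le
    have g2 : γ - ll Mn b m < 0 := by simp only [ll, ← hs]; linarith
    have g3 : γ - uu Mn b m < 0 := by simp only [uu, ← hs]; linarith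
    have h3456 := mul_pos_of_neg_of_neg g3 h456
    have h23456 := mul_neg_of_neg_of_pos g2 h3456
    exact mul_neg_of_pos_of_neg g1 h23456
  · -- m < k : γ above the interval around cen m
    have hkm' : (m:ℝ) + 1 ≤ k := by exact_mod_cast hkm
    have hD : s * ((m:ℝ) + 1) ≤ s * k := mul_le_mul_of_nonneg_left hkm' hr.le
    have g2 : 0 < γ - ll Mn b m := by simp only [ll, ← hs]; linarith
    have g3 : 0 < γ - uu Mn b m := by simp only [uu, ← hs]; linarith
    have h3456 := mul_neg_of_pos_of_neg g3 h456
    have h23456 := mul_neg_of_pos_of_neg g2 h3456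
    exact mul_neg_of_pos_of_neg g1 h23456

/-- sign on J (interval index Mn): positive -/
lemma sign_J (hb : 0 < b) (βm : ℝ) (hβm : b ≤ βm) (m : ℕ) (hm : m < Mn)
    (γ : ℝ) (hγ : γ ∈ Ioo (cen Mn b Mn - rr Mn b) (cen Mn b Mn + rr Mn b)) :
    0 < (qp Mn b βm m).eval γ := by
  have hr := rr_pos Mn b hb
  have hbe := b_eq Mn b
  set s := rr Mn b with hs
  obtain ⟨h1, h2⟩ := hγ
  have hmM : (m:ℝ) + 1 ≤ Mn := by exact_mod_cast hm
  have hA : s * ((m:ℝ) + 1) ≤ s * Mn := mul_le_mul_of_nonneg_left hmM hr.le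
  rw [qp_eval]
  simp only [cen] at h1 h2
  push_cast at h1 h2
  have g2 : 0 < γ - ll Mn b m := by simp only [ll, ← hs]; linarith
  have g3 : 0 < γ - uu Mn b m := by simp only [uu, ← hs]; linarith
  have g4 : 0 < γ - n1 Mn b := by simp only [n1, ← hs]; linarith
  have g5 : γ - n2 Mn b < 0 := by simp only [n2, ← hs]; push_cast; linarith
  have g6 : γ - n3 Mn b < 0 := by simp only [n3, ← hs]; push_cast; linarith
  have g1 : 0 < (γ - βm)^2 := by
    have h9 : γ < βm := by linarith
    have : γ - βm ≠ 0 := ne_of_lt (by linarith)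
    positivity
  have h56 := mul_pos_of_neg_of_neg g5 g6
  have h456 := mul_pos g4 h56
  have h3456 := mul_pos g3 h456
  have h23456 := mul_pos g2 h3456
  exact mul_pos g1 h23456

/-- sign on K (interval index Mn+1): negative -/
lemma sign_K (hb : 0 < b) (βm : ℝ) (hβm : b ≤ βm) (m : ℕ) (hm : m < Mn)
    (γ : ℝ) (hγ : γ ∈ Ioo (cen Mn b (Mn+1) - rr Mn b) (cen Mn b (Mn+1) + rr Mn b)) :
    (qp Mn b βm m).eval γ < 0 := by
  have hr := rr_pos Mn b hb
  have hbe := b_eq Mn b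
  set s := rr Mn b with hs
  obtain ⟨h1, h2⟩ := hγ
  have hmM : (m:ℝ) + 1 ≤ Mn := by exact_mod_cast hm
  have hA : s * ((m:ℝ) + 1) ≤ s * Mn := mul_le_mul_of_nonneg_left hmM hr.le
  rw [qp_eval]
  simp only [cen] at h1 h2
  push_cast at h1 h2
  have g2 : 0 < γ - ll Mn b m := by simp only [ll, ← hs]; linarith
  have g3 : 0 < γ - uu Mn b m := by simp only [uu, ← hs]; linarith
  have g4 : 0 < γ - n1 Mn b := by simp only [n1, ← hs]; push_cast; linarith
  have g5 : 0 < γ - n2 Mn b := by simp only [n2, ← hs]; push_cast; linarith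
  have g6 : γ - n3 Mn b < 0 := by simp only [n3, ← hs]; push_cast; linarith
  have g1 : 0 < (γ - βm)^2 := by
    have h9 : γ < βm := by linarith
    have : γ - βm ≠ 0 := ne_of_lt (by linarith)
    positivity
  have h56 := mul_neg_of_pos_of_neg g5 g6
  have h456 := mul_neg_of_pos_of_neg g4 h56
  have h3456 := mul_neg_of_pos_of_neg g3 h456
  have h23456 := mul_neg_of_pos_of_neg g2 h3456
  exact mul_neg_of_pos_of_neg g1 h23456

/-- value at `β k`, `k ≠ m`: positive -/
lemma sign_beta (hb : 0 < b) (βm βk : ℝ) (hβm : b ≤ βm) (hβk : b ≤ βk)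
    (hne : βk ≠ βm) (m : ℕ) (hm : m < Mn) :
    0 < (qp Mn b βm m).eval βk := by
  have hr := rr_pos Mn b hb
  have hbe := b_eq Mn b
  set s := rr Mn b with hs
  have hmM : (m:ℝ) + 1 ≤ Mn := by exact_mod_cast hm
  have hA : s * ((m:ℝ) + 1) ≤ s * Mn := mul_le_mul_of_nonneg_left hmM hr.le
  rw [qp_eval]
  have g2 : 0 < βk - ll Mn b m := by simp only [ll, ← hs]; linarith
  have g3 : 0 < βk - uu Mn b m := by simp only [uu, ← hs]; linarith
  have g4 : 0 < βk - n1 Mn b := by simp only [n1, ← hs]; push_cast; linarith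
  have g5 : 0 < βk - n2 Mn b := by simp only [n2, ← hs]; push_cast; linarith
  have g6 : 0 < βk - n3 Mn b := by simp only [n3, ← hs]; push_cast; linarith
  have g1 : 0 < (βk - βm)^2 := by
    have : βk - βm ≠ 0 := sub_ne_zero.mpr hne
    positivity
  exact mul_pos g1 (mul_pos g2 (mul_pos g3 (mul_pos g4 (mul_pos g5 g6))))

/-- value at `βm`: zero -/
lemma sign_self (βm : ℝ) (m : ℕ) : (qp Mn b βm m).eval βm = 0 := by
  rw [qp_eval]; ring

/-- the intervals sit inside `(0, b)` -/
lemma interval_sub (hb : 0 < b) (i : ℕ) (hi : i ≤ Mn + 1) :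
    Ioo (cen Mn b i - rr Mn b) (cen Mn b i + rr Mn b) ⊆ Ioo 0 b := by
  have hr := rr_pos Mn b hb
  have hbe := b_eq Mn b
  have hiM : (i:ℝ) ≤ Mn + 1 := by exact_mod_cast hi
  set s := rr Mn b with hs
  rintro γ ⟨h1, h2⟩
  have hB : s * ((i:ℝ) + 1) ≤ s * ((Mn:ℝ) + 2) := by
    apply mul_le_mul_of_nonneg_left _ hr.le
    linarith
  have hC : 0 ≤ s * (i:ℝ) := mul_nonneg hr.le (Nat.cast_nonneg i)
  simp only [cen] at h1 h2
  constructor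
  · linarith
  · push_cast at hB ⊢; linarith

lemma natDegree_qp (βm : ℝ) (m : ℕ) : (qp Mn b βm m).natDegree ≤ 7 := by
  unfold qp
  compute_degree


section ProjectLayer
variable (Mn : ℕ) (b : ℝ) (βf : Fin Mn → ℝ)

lemma summable_aux (γ : ℝ) (f : ℕ → ℝ) (d : ℕ) (hf : ∀ t, d ≤ t → f t = 0) :
    Summable (fun t => γ ^ t * f t) := by
  apply summable_of_ne_finset_zero (s := Finset.range d)
  intro t ht
  rw [hf t (by simpa using ht), mul_zero]

lemma coeff_zero_of_ge (p : ℝ[X]) (hp : p.natDegree ≤ 7) (t : ℕ) (ht : 8 ≤ t) :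
    p.coeff t = 0 :=
  Polynomial.coeff_eq_zero_of_natDegree_lt (lt_of_le_of_lt hp (by omega))

lemma dv_poly (γ : ℝ) (p : ℝ[X]) : (∑' t, γ ^ t * p.coeff t) = p.eval γ := by
  rw [tsum_eq_sum (s := p.support) (fun t ht => by
    rw [Polynomial.notMem_support_iff.mp ht, mul_zero])]
  rw [Polynomial.eval_eq_sum, Polynomial.sum]
  exact Finset.sum_congr rfl (fun t _ => mul_comm _ _)

/-- bound for all coefficients appearing -/
def BB : ℝ := 1 + ∑ m : Fin Mn, ∑ t ∈ Finset.range 8, |(qp Mn b (βf m) m).coeff t|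

/-- the base project `x` -/
def xx : ℕ → ℝ := fun t => if t < 8 then BB Mn b βf else 0

/-- the competitor projects -/
def yy (m : Fin Mn) : ℕ → ℝ := fun t => xx Mn b βf t - (qp Mn b (βf m) m).coeff t

lemma BB_bound (m : Fin Mn) (t : ℕ) (ht : t < 8) : |(qp Mn b (βf m) m).coeff t| ≤ BB Mn b βf := by
  have h1 : |(qp Mn b (βf m) m).coeff t| ≤ ∑ t ∈ Finset.range 8, |(qp Mn b (βf m) m).coeff t| :=
    Finset.single_le_sum (f := fun t => |(qp Mn b (βf m) m).coeff t|)
      (fun _ _ => abs_nonneg _) (Finset.mem_range.mpr ht)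
  have h2 : ∑ t ∈ Finset.range 8, |(qp Mn b (βf m) m).coeff t| ≤
      ∑ m : Fin Mn, ∑ t ∈ Finset.range 8, |(qp Mn b (βf m) m).coeff t| :=
    Finset.single_le_sum (f := fun m : Fin Mn => ∑ t ∈ Finset.range 8, |(qp Mn b (βf m) m).coeff t|)
      (fun _ _ => Finset.sum_nonneg fun _ _ => abs_nonneg _) (Finset.mem_univ m)
  unfold BB; linarith

lemma BB_pos : 0 < BB Mn b βf := by
  have h : (0:ℝ) ≤ ∑ m : Fin Mn, ∑ t ∈ Finset.range 8, |(qp Mn b (βf m) m).coeff t| :=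
    Finset.sum_nonneg fun _ _ => Finset.sum_nonneg fun _ _ => abs_nonneg _
  unfold BB; linarith

lemma xx_proj : IsProject (xx Mn b βf) := by
  constructor
  · apply Set.Finite.subset (Set.finite_Iio 8)
    intro t ht
    simp only [Function.mem_support, xx] at ht
    by_contra h
    simp only [Set.mem_Iio, not_lt] at h
    exact ht (by rw [if_neg (by omega)])
  · intro t
    unfold xx
    split
    · exact (BB_pos Mn b βf).le
    · exact le_refl 0

lemma yy_proj (m : Fin Mn) : IsProject (yy Mn b βf m) := by
  constructor
  · apply Set.Finite.subset (Set.finite_Iio 8)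
    intro t ht
    simp only [Function.mem_support, yy] at ht
    by_contra h
    simp only [Set.mem_Iio, not_lt] at h
    apply ht
    rw [coeff_zero_of_ge _ (natDegree_qp Mn b (βf m) m) t (by omega)]
    unfold xx
    rw [if_neg (by omega)]
    ring
  · intro t
    unfold yy xx
    by_cases ht : t < 8
    · rw [if_pos ht]
      have h1 := BB_bound Mn b βf m t ht
      have h2 := abs_le.mp h1
      linarith [h2.2]
    · rw [if_neg ht, coeff_zero_of_ge _ (natDegree_qp Mn b (βf m) m) t (by omega)]
      norm_num

lemma dv_yy (γ : ℝ) (m : Fin Mn) :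
    dv γ (yy Mn b βf m) = dv γ (xx Mn b βf) - (qp Mn b (βf m) m).eval γ := by
  have h1 : Summable (fun t => γ ^ t * xx Mn b βf t) :=
    summable_aux γ _ 8 (fun t ht => by unfold xx; rw [if_neg (by omega)])
  have h2 : Summable (fun t => γ ^ t * (qp Mn b (βf m) m).coeff t) :=
    summable_aux γ _ 8 (fun t ht => coeff_zero_of_ge _ (natDegree_qp Mn b (βf m) m) t ht)
  unfold dv yy
  have h3 : (fun t => γ ^ t * (xx Mn b βf t - (qp Mn b (βf m) m).coeff t))
      = fun t => γ ^ t * xx Mn b βf t - γ ^ t * (qp Mn b (βf m) m).coeff t := by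
    funext t; ring
  rw [h3, Summable.tsum_sub h1 h2, dv_poly]

open Classical in
/-- the menu -/
def DD : Finset (ℕ → ℝ) := insert (xx Mn b βf) (Finset.image (yy Mn b βf) Finset.univ)

open Classical in
lemma xx_mem_DD : xx Mn b βf ∈ DD Mn b βf := Finset.mem_insert_self _ _

lemma mem_DD (z : ℕ → ℝ) : z ∈ (DD Mn b βf : Set (ℕ → ℝ)) ↔
    z = xx Mn b βf ∨ ∃ k, yy Mn b βf k = z := by
  simp [DD]

lemma maxset_DD (hb : 0 < b) (hβm : ∀ k, b ≤ βf k) (hinj : Function.Injective βf)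
    (m : Fin Mn) :
    MaxSet (↑(DD Mn b βf)) (βf m) = {xx Mn b βf, yy Mn b βf m} := by
  have key : ∀ k : Fin Mn, dv (βf m) (yy Mn b βf k) ≤ dv (βf m) (xx Mn b βf) ∧
      (k ≠ m → dv (βf m) (yy Mn b βf k) < dv (βf m) (xx Mn b βf)) := by
    intro k
    rw [dv_yy]
    by_cases hk : k = m
    · subst hk
      rw [sign_self]
      exact ⟨by linarith, fun h => absurd rfl h⟩
    · have hpos := sign_beta Mn b hb (βf k) (βf m) (hβm k) (hβm m)
        (fun h => hk (hinj h.symm)) k k.2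
      exact ⟨by linarith, fun _ => by linarith⟩
  ext z
  simp only [MaxSet, Set.mem_setOf_eq, Set.mem_insert_iff, Set.mem_singleton_iff]
  constructor
  · rintro ⟨hzD, hzmax⟩
    rcases (mem_DD Mn b βf z).mp hzD with rfl | ⟨k, rfl⟩
    · exact Or.inl rfl
    · by_cases hk : k = m
      · subst hk; exact Or.inr rfl
      · exfalso
        have h1 := hzmax (xx Mn b βf) ((mem_DD Mn b βf _).mpr (Or.inl rfl))
        have h2 := (key k).2 hk
        linarith
  · intro hz
    have hxmem : xx Mn b βf ∈ (DD Mn b βf : Set (ℕ → ℝ)) := (mem_DD Mn b βf _).mpr (Or.inl rfl)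
    have hdvz : dv (βf m) z = dv (βf m) (xx Mn b βf) := by
      rcases hz with rfl | rfl
      · rfl
      · rw [dv_yy, sign_self]; ring
    constructor
    · rcases hz with rfl | rfl
      · exact hxmem
      · exact (mem_DD Mn b βf _).mpr (Or.inr ⟨m, rfl⟩)
    · intro w hw
      rw [hdvz]
      rcases (mem_DD Mn b βf w).mp hw with rfl | ⟨k, rfl⟩
      · exact le_refl _
      · exact (key k).1

lemma mem_maxset_pair (γ : ℝ) (m : Fin Mn) :
    xx Mn b βf ∈ MaxSet {xx Mn b βf, yy Mn b βf m} γ ↔ 0 ≤ (qp Mn b (βf m) m).eval γ := by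
  simp only [MaxSet, Set.mem_setOf_eq, Set.mem_insert_iff, Set.mem_singleton_iff]
  constructor
  · rintro ⟨-, hmax⟩
    have := hmax (yy Mn b βf m) (Or.inr rfl)
    rw [dv_yy] at this
    linarith
  · intro h
    refine ⟨by simp, ?_⟩
    rintro w hw
    rcases hw with rfl | rfl
    · exact le_refl _
    · rw [dv_yy]; linarith

end ProjectLayer
section MixLayer
variable (Mn : ℕ) (b : ℝ)

lemma cen_bounds (hb : 0 < b) (hb1 : b ≤ 1) (i : ℕ) (hi : i ≤ Mn + 1) :
    0 ≤ cen Mn b i - rr Mn b ∧ cen Mn b i - rr Mn b < cen Mn b i + rr Mn b ∧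
      cen Mn b i + rr Mn b ≤ 1 := by
  have hr := rr_pos Mn b hb
  have hbe := b_eq Mn b
  have hiM : (i:ℝ) ≤ Mn + 1 := by exact_mod_cast hi
  have hC : 0 ≤ rr Mn b * (i:ℝ) := mul_nonneg hr.le (Nat.cast_nonneg i)
  have hB : rr Mn b * (i:ℝ) ≤ rr Mn b * ((Mn:ℝ) + 1) := mul_le_mul_of_nonneg_left hiM hr.le
  unfold cen
  refine ⟨by linarith, by linarith, by linarith⟩

def unifI (i : ℕ) : Measure ↥(Icc (0:ℝ) 1) :=
  unif (cen Mn b i - rr Mn b) (cen Mn b i + rr Mn b)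

lemma unifI_one (hb : 0 < b) (hb1 : b ≤ 1) (i : ℕ) (hi : i ≤ Mn + 1)
    {S : Set ↥(Icc (0:ℝ) 1)}
    (hS : ∀ x : ℝ, x ∈ Ioo (cen Mn b i - rr Mn b) (cen Mn b i + rr Mn b) →
      ∀ hx : x ∈ Icc (0:ℝ) 1, (⟨x, hx⟩ : ↥(Icc (0:ℝ) 1)) ∈ S) :
    unifI Mn b i S = 1 := by
  obtain ⟨c1, c2, c3⟩ := cen_bounds Mn b hb hb1 i hi
  exact unif_eq_one c2 c1 c3 hS

lemma unifI_univ (hb : 0 < b) (hb1 : b ≤ 1) (i : ℕ) (hi : i ≤ Mn + 1) :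
    unifI Mn b i univ = 1 := unifI_one Mn b hb hb1 i hi (fun _ _ _ => mem_univ _)

def mix (w : Fin Mn → ℝ) (cJ cK : ℝ) : Measure ↥(Icc (0:ℝ) 1) :=
  (∑ m : Fin Mn, ENNReal.ofReal (w m) • unifI Mn b m) +
    (ENNReal.ofReal cJ • unifI Mn b Mn + ENNReal.ofReal cK • unifI Mn b (Mn + 1))

lemma mix_apply (w : Fin Mn → ℝ) (cJ cK : ℝ) (S : Set ↥(Icc (0:ℝ) 1)) :
    mix Mn b w cJ cK S = (∑ m : Fin Mn, ENNReal.ofReal (w m) * unifI Mn b m S) +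
      (ENNReal.ofReal cJ * unifI Mn b Mn S + ENNReal.ofReal cK * unifI Mn b (Mn + 1) S) := by
  simp [mix, Measure.add_apply, Measure.smul_apply, smul_eq_mul,
    Measure.finset_sum_apply]

lemma mix_noatom (w : Fin Mn → ℝ) (cJ cK : ℝ) (γ : ↥(Icc (0:ℝ) 1)) :
    mix Mn b w cJ cK {γ} = 0 := by
  rw [mix_apply]
  simp [unifI, unif_noAtoms]

lemma mix_univ (hb : 0 < b) (hb1 : b ≤ 1) (w : Fin Mn → ℝ) (cJ cK : ℝ)
    (hw : ∀ m, 0 ≤ w m) (hcJ : 0 ≤ cJ) (hcK : 0 ≤ cK)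
    (htot : ∑ m : Fin Mn, w m + (cJ + cK) = 1) :
    IsProbabilityMeasure (mix Mn b w cJ cK) := by
  constructor
  rw [mix_apply]
  rw [unifI_univ Mn b hb hb1 Mn (by omega), unifI_univ Mn b hb hb1 (Mn+1) (by omega)]
  have hm : ∀ m : Fin Mn, unifI Mn b (↑m) univ = 1 := fun m =>
    unifI_univ Mn b hb hb1 m (by omega)
  simp only [hm, mul_one]
  rw [← ENNReal.ofReal_sum_of_nonneg (fun m _ => hw m), ← ENNReal.ofReal_add hcJ hcK,
    ← ENNReal.ofReal_add (Finset.sum_nonneg fun (m : Fin Mn) _ => hw m) (by linarith), htot,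
    ENNReal.ofReal_one]

lemma mix_Aset (hb : 0 < b) (hb1 : b ≤ 1) (βm : ℝ) (hβm : b ≤ βm) (m : Fin Mn)
    (w : Fin Mn → ℝ) (cJ cK : ℝ) (hw : ∀ m, 0 ≤ w m) (hcJ : 0 ≤ cJ) :
    mix Mn b w cJ cK {γ : ↥(Icc (0:ℝ) 1) | 0 ≤ (qp Mn b βm ↑m).eval ↑γ}
      = ENNReal.ofReal (w m + cJ) := by
  rw [mix_apply]
  have hJ : unifI Mn b Mn {γ : ↥(Icc (0:ℝ) 1) | 0 ≤ (qp Mn b βm ↑m).eval ↑γ} = 1 := by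
    apply unifI_one Mn b hb hb1 Mn (by omega)
    intro x hx hx1
    exact (sign_J Mn b hb βm hβm ↑m m.2 x hx).le
  have hK : unifI Mn b (Mn+1) {γ : ↥(Icc (0:ℝ) 1) | 0 ≤ (qp Mn b βm ↑m).eval ↑γ} = 0 := by
    apply unif_eq_zero
    intro x hx hx1 hmem
    exact absurd hmem (not_le.mpr (sign_K Mn b hb βm hβm ↑m m.2 x hx))
  have hI : ∀ k : Fin Mn, unifI Mn b (↑k) {γ : ↥(Icc (0:ℝ) 1) | 0 ≤ (qp Mn b βm ↑m).eval ↑γ}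
      = if k = m then 1 else 0 := by
    intro k
    by_cases hk : k = m
    · subst hk
      rw [if_pos rfl]
      apply unifI_one Mn b hb hb1 k (by omega)
      intro x hx hx1
      exact (sign_own Mn b hb βm hβm ↑k k.2 x hx).le
    · rw [if_neg hk]
      apply unif_eq_zero
      intro x hx hx1 hmem
      have hne : (k:ℕ) ≠ (m:ℕ) := fun h => hk (Fin.ext h)
      exact absurd hmem (not_le.mpr (sign_other Mn b hb βm hβm ↑m ↑k m.2 k.2 hne x hx))
  rw [hJ, hK]
  simp only [hI, mul_ite, mul_one, mul_zero, Finset.sum_ite_eq', Finset.mem_univ,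
    if_true, add_zero]
  rw [← ENNReal.ofReal_add (hw m) hcJ]

end MixLayer

end S4

theorem stmt4 (N M : ℕ) (hN : 1 ≤ N) (hM : 2 ≤ M)
    (β : Fin M → ℝ) (hβmem : ∀ m, β m ∈ Ioo (0:ℝ) 1) (hβ : StrictAnti β)
    (F : (Fin N → Fin M → ℝ) → (Fin M → ℝ))
    -- Assumption 1
    (hFmaps : ∀ P : Fin N → Fin M → ℝ, (∀ n, P n ∈ stdSimplex ℝ (Fin M)) →
      F P ∈ stdSimplex ℝ (Fin M))
    (hFconst : ∀ Q ∈ stdSimplex ℝ (Fin M), F (fun _ => Q) = Q)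
    -- Assumption 2
    (G : (Fin N → TieBreaker) → TieBreaker)
    -- Unanimity condition (4)
    (unan : ∀ P : Fin N → Fin M → ℝ, (∀ n, P n ∈ stdSimplex ℝ (Fin M)) →
      ∀ (υ : Fin N → TieBreaker) (D : Finset (ℕ → ℝ)),
        D.Nonempty → (∀ y ∈ D, IsProject y) → ∀ x ∈ D,
        ((∀ n, 1/2 ≤ rcr β (P n) (υ n) x D) → 1/2 ≤ rcr β (F P) (G υ) x D) ∧
        ((∀ n, rcr β (P n) (υ n) x D < 1/2) → rcr β (F P) (G υ) x D < 1/2)) :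
    -- conclusion of Lemma 1: unanimous disagreement implies distinct aggregates
    ∀ P Q : Fin N → Fin M → ℝ,
      (∀ n, P n ∈ stdSimplex ℝ (Fin M)) → (∀ n, Q n ∈ stdSimplex ℝ (Fin M)) →
      (∀ n, P n ≠ Q n) → F P ≠ F Q := by
  intro P Q hP hQ hPQ heq
  have hM0 : 0 < M := by omega
  set Mlast : Fin M := ⟨M - 1, by omega⟩ with hMlast
  set b := β Mlast with hbdef
  have hb : 0 < b := (hβmem Mlast).1
  have hb1 : b ≤ 1 := (hβmem Mlast).2.le
  have hβb : ∀ k, b ≤ β k := by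
    intro k
    apply hβ.antitone
    rw [Fin.le_def]
    simp only [hMlast]
    omega
  have hinj : Function.Injective β := hβ.injective
  set D := S4.DD M b β with hD
  set xp := S4.xx M b β with hxp
  have hAset : ∀ m : Fin M,
      {γ : ↥(Icc (0:ℝ) 1) | xp ∈ MaxSet (MaxSet (↑D) (β m)) (γ:ℝ)} =
        {γ : ↥(Icc (0:ℝ) 1) | 0 ≤ (S4.qp M b (β m) ↑m).eval ↑γ} := by
    intro m
    ext γ
    simp only [Set.mem_setOf_eq, hD, hxp,
      S4.maxset_DD M b β hb hβb hinj m, S4.mem_maxset_pair]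
  -- individual weights
  set lam : ℝ := 1 / (2 * M) with hlam
  have hlampos : 0 < lam := by
    rw [hlam]; positivity
  have hMne : (0:ℝ) < M := by exact_mod_cast hM0
  have hlamM : lam * M = 1/2 := by
    rw [hlam]; field_simp
  set w : Fin N → Fin M → ℝ := fun n m => if Q n m < P n m then lam else 0 with hw
  have hw0 : ∀ n m, 0 ≤ w n m := by
    intro n m; rw [hw]; dsimp only; split
    · exact hlampos.le
    · exact le_refl 0
  have hwlam : ∀ n m, w n m ≤ lam := by
    intro n m; rw [hw]; dsimp only; split
    · exact le_refl _
    · exact hlampos.le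
  set cJ : Fin N → ℝ := fun n => 1/2 - ∑ m, P n m * w n m with hcJ
  set cK : Fin N → ℝ := fun n => 1 - (∑ m, w n m + cJ n) with hcK
  have hsumPw : ∀ n, 0 ≤ ∑ m, P n m * w n m ∧ ∑ m, P n m * w n m ≤ 1/2 := by
    intro n
    constructor
    · exact Finset.sum_nonneg fun m _ => mul_nonneg ((hP n).1 m) (hw0 n m)
    · have h1 : ∑ m, P n m * w n m ≤ ∑ m, P n m * lam := by
        apply Finset.sum_le_sum
        intro m _
        exact mul_le_mul_of_nonneg_left (hwlam n m) ((hP n).1 m)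
      have h2 : ∑ m, P n m * lam = lam := by
        rw [← Finset.sum_mul, (hP n).2, one_mul]
      have h3 : lam ≤ 1/2 := by
        rw [hlam]
        rw [div_le_div_iff₀ (by positivity) (by norm_num)]
        have : (1:ℝ) ≤ M := by exact_mod_cast hM0
        linarith
      linarith
  have hcJ0 : ∀ n, 0 ≤ cJ n := by
    intro n; rw [hcJ]; dsimp only; linarith [(hsumPw n).2]
  have hcK0 : ∀ n, 0 ≤ cK n := by
    intro n
    rw [hcK]; dsimp only
    have h1 : ∑ m, w n m ≤ ∑ m : Fin M, lam := Finset.sum_le_sum fun m _ => hwlam n m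
    have h2 : ∑ m : Fin M, lam = lam * M := by
      rw [Finset.sum_const, Finset.card_univ, Fintype.card_fin, nsmul_eq_mul, mul_comm]
    rw [hcJ]; dsimp only
    have := (hsumPw n).1
    linarith [hlamM]
  have htot : ∀ n, ∑ m, w n m + (cJ n + cK n) = 1 := by
    intro n; rw [hcK]; ring
  -- tie breakers
  set υ : Fin N → TieBreaker := fun n =>
    ⟨S4.mix M b (w n) (cJ n) (cK n),
      S4.mix_univ M b hb hb1 (w n) (cJ n) (cK n) (hw0 n) (hcJ0 n) (hcK0 n) (htot n),
      S4.mix_noatom M b (w n) (cJ n) (cK n)⟩ with hυ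
  -- rcr values
  have hrcr : ∀ (n : Fin N) (R : Fin M → ℝ),
      rcr β R (υ n) xp D = ∑ m, R m * (w n m + cJ n) := by
    intro n R
    unfold rcr
    apply Finset.sum_congr rfl
    intro m _
    congr 1
    rw [hυ]
    dsimp only
    rw [hAset m, S4.mix_Aset M b hb hb1 (β m) (hβb m) m (w n) (cJ n) (cK n) (hw0 n) (hcJ0 n),
      ENNReal.toReal_ofReal (by linarith [hw0 n m, hcJ0 n])]
  -- individual probabilities
  have hPval : ∀ n, rcr β (P n) (υ n) xp D = 1/2 := by
    intro n
    rw [hrcr n (P n)]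
    have : ∑ m, P n m * (w n m + cJ n) = ∑ m, P n m * w n m + (∑ m, P n m) * cJ n := by
      rw [Finset.sum_mul, ← Finset.sum_add_distrib]
      apply Finset.sum_congr rfl
      intro m _
      ring
    rw [this, (hP n).2, one_mul, hcJ]
    ring
  have hQval : ∀ n, rcr β (Q n) (υ n) xp D < 1/2 := by
    intro n
    rw [hrcr n (Q n)]
    have hsplit : ∑ m, Q n m * (w n m + cJ n) = ∑ m, Q n m * w n m + (∑ m, Q n m) * cJ n := by
      rw [Finset.sum_mul, ← Finset.sum_add_distrib]
      apply Finset.sum_congr rfl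
      intro m _
      ring
    rw [hsplit, (hQ n).2, one_mul]
    -- need ∑ Q*w < ∑ P*w
    have hex : ∃ k, Q n k < P n k := by
      by_contra hc
      push_neg at hc
      apply hPQ n
      funext m
      have hsum : ∑ m, (Q n m - P n m) = 0 := by
        rw [Finset.sum_sub_distrib, (hP n).2, (hQ n).2]
        ring
      have hz := (Finset.sum_eq_zero_iff_of_nonneg
        (fun m _ => by linarith [hc m] : ∀ m ∈ Finset.univ, 0 ≤ Q n m - P n m)).mp hsum
      have := hz m (Finset.mem_univ m)
      linarith
    obtain ⟨k, hk⟩ := hex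
    have hstrict : ∑ m, Q n m * w n m < ∑ m, P n m * w n m := by
      apply Finset.sum_lt_sum
      · intro m _
        rw [hw]; dsimp only
        split
        · rename_i h
          exact mul_le_mul_of_nonneg_right h.le hlampos.le
        · simp
      · refine ⟨k, Finset.mem_univ k, ?_⟩
        rw [hw]; dsimp only
        rw [if_pos hk]
        exact mul_lt_mul_of_pos_right hk hlampos
    rw [hcJ]; dsimp only
    linarith
  -- menu properties
  have hxD : xp ∈ D := by
    rw [hD, hxp]
    exact S4.xx_mem_DD M b β
  have hDn : D.Nonempty := ⟨xp, hxD⟩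
  have hproj : ∀ y ∈ D, IsProject y := by
    intro y hy
    have : y ∈ (D : Set (ℕ → ℝ)) := hy
    rw [hD] at this
    rcases (S4.mem_DD M b β y).mp this with rfl | ⟨k, rfl⟩
    · exact S4.xx_proj M b β
    · exact S4.yy_proj M b β k
  -- unanimity
  have u1 := (unan P hP υ D hDn hproj xp hxD).1 (fun n => le_of_eq (hPval n).symm)
  have u2 := (unan Q hQ υ D hDn hproj xp hxD).2 hQval
  rw [← heq] at u2
  linarith
end
end

section
/- Suppose F : Δ^N → Δ satisfies Assumption 1 and the restricted unanimity condition (5). Then for every profile (P^1, …, P^N) ∈ Δ^N the value F(P^1, …, P^N) lies in the convex hull of {P^1, …, P^N}; that is, there exist nonnegative reals μ_1, …, μ_N (possibly depending on the profile) summing to one with F(P^1, …, P^N) = Σ_{n=1}^N μ_n P^n. -/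
open MeasureTheory Set

noncomputable section

def xproj : ℕ → ℝ := fun t => if t < 4 then 4 else 0

def yproj (b c : ℝ) : ℕ → ℝ := fun t =>
  if t = 0 then 4 + b^2*c else if t = 1 then 4 - (2*b*c + b^2)
  else if t = 2 then 4 + (c + 2*b) else if t = 3 then 3 else 0

lemma dv_eq_sum4 (γ : ℝ) (z : ℕ → ℝ) (hz : ∀ t, 4 ≤ t → z t = 0) :
    dv γ z = ∑ t ∈ Finset.range 4, γ ^ t * z t := by
  refine tsum_eq_sum fun b hb => ?_
  rw [hz b (by simpa using hb), mul_zero]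

lemma dv_xproj (γ : ℝ) : dv γ xproj = 4 + 4*γ + 4*γ^2 + 4*γ^3 := by
  rw [dv_eq_sum4 γ xproj (fun t ht => by simp [xproj, Nat.not_lt.mpr ht])]
  simp [Finset.sum_range_succ, xproj]
  ring

lemma dv_yproj (γ b c : ℝ) :
    dv γ (yproj b c) = dv γ xproj + (c - γ) * (γ - b)^2 := by
  rw [dv_eq_sum4 γ (yproj b c) (fun t ht => by
    have h0 : t ≠ 0 := by omega
    have h1 : t ≠ 1 := by omega
    have h2 : t ≠ 2 := by omega
    have h3 : t ≠ 3 := by omega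
    simp [yproj, h0, h1, h2, h3]), dv_xproj]
  simp [Finset.sum_range_succ, yproj]
  ring

lemma isProject_xproj : IsProject xproj := by
  constructor
  · apply Set.Finite.subset (Set.finite_Iio 4)
    intro t ht
    simp only [Function.mem_support, xproj] at ht
    by_contra h
    simp only [Set.mem_Iio, not_lt] at h
    exact ht (by simp [Nat.not_lt.mpr h])
  · intro t; simp only [xproj]; split <;> norm_num

lemma isProject_yproj {b c : ℝ} (hb : b ∈ Ioo (0:ℝ) 1) (hc0 : 0 ≤ c) (hc1 : c ≤ 1) :
    IsProject (yproj b c) := by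
  obtain ⟨hb0, hb1⟩ := hb
  constructor
  · apply Set.Finite.subset (Set.finite_Iio 4)
    intro t ht
    simp only [Function.mem_support, yproj] at ht
    by_contra h
    simp only [Set.mem_Iio, not_lt] at h
    have h0 : t ≠ 0 := by omega
    have h1 : t ≠ 1 := by omega
    have h2 : t ≠ 2 := by omega
    have h3 : t ≠ 3 := by omega
    simp [h0, h1, h2, h3] at ht
  · intro t
    simp only [yproj]
    have hbc : b * c ≤ 1 := by nlinarith
    have hbb : b^2 ≤ 1 := by nlinarith
    split
    · nlinarith
    · split
      · nlinarith
      · split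
        · nlinarith
        · split <;> norm_num

def νmeas (u v : ℝ) : Measure ↥(Icc (0:ℝ) 1) :=
  Measure.comap Subtype.val ((ENNReal.ofReal (v-u))⁻¹ • volume.restrict (Icc u v))

lemma νmeas_apply (u v : ℝ) (S : Set ↥(Icc (0:ℝ) 1)) :
    νmeas u v S = (ENNReal.ofReal (v-u))⁻¹ * volume (Subtype.val '' S ∩ Icc u v) := by
  rw [νmeas, (MeasurableEmbedding.subtype_coe measurableSet_Icc).comap_apply,
    Measure.smul_apply, Measure.restrict_apply' measurableSet_Icc, smul_eq_mul]

lemma νmeas_prob {u v : ℝ} (hu : 0 < u) (huv : u < v) (hv : v < 1) :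
    IsProbabilityMeasure (νmeas u v) := by
  constructor
  rw [νmeas_apply]
  have : Subtype.val '' (univ : Set ↥(Icc (0:ℝ) 1)) ∩ Icc u v = Icc u v := by
    rw [Subtype.coe_image_univ]
    exact inter_eq_self_of_subset_right (Icc_subset_Icc hu.le hv.le)
  rw [this, Real.volume_Icc]
  exact ENNReal.inv_mul_cancel (by simp only [ne_eq, ENNReal.ofReal_eq_zero, not_le]; linarith) ENNReal.ofReal_ne_top

lemma νmeas_noAtoms {u v : ℝ} (γ : ↥(Icc (0:ℝ) 1)) : νmeas u v {γ} = 0 := by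
  rw [νmeas_apply]
  have : Subtype.val '' ({γ} : Set ↥(Icc (0:ℝ) 1)) = {(γ:ℝ)} := image_singleton
  rw [this]
  refine mul_eq_zero.mpr (Or.inr (measure_mono_null inter_subset_left ?_))
  exact Real.volume_singleton

lemma νmeas_cond {u v c b : ℝ} (hu : 0 < u) (huc : u ≤ c) (hcv : c ≤ v)
    (hv : v < 1) (hb : v < b) :
    (νmeas u v {γ : ↥(Icc (0:ℝ) 1) | (c - (γ:ℝ)) * ((γ:ℝ) - b)^2 ≤ 0}).toReal
      = (v - c) / (v - u) := by
  rw [νmeas_apply]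
  have himg : Subtype.val '' {γ : ↥(Icc (0:ℝ) 1) | (c - (γ:ℝ)) * ((γ:ℝ) - b)^2 ≤ 0}
      ∩ Icc u v = Icc c v := by
    ext t
    simp only [mem_inter_iff, mem_image, mem_setOf_eq, mem_Icc, Subtype.exists,
      exists_and_right, exists_eq_right]
    constructor
    · rintro ⟨⟨ht01, hcond⟩, htu, htv⟩
      have hsq : 0 < (t - b)^2 := by nlinarith
      constructor
      · nlinarith
      · exact htv
    · rintro ⟨hct, htv⟩
      have h01 : 0 ≤ t ∧ t ≤ 1 := ⟨by linarith, by linarith⟩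
      exact ⟨⟨⟨h01.1, h01.2⟩, by nlinarith⟩, by linarith, htv⟩
  rw [himg, Real.volume_Icc, ENNReal.toReal_mul, ENNReal.toReal_inv,
    ENNReal.toReal_ofReal (by linarith), ENNReal.toReal_ofReal (by linarith)]
  rw [div_eq_inv_mul]

lemma key {M : ℕ} (hM : 1 ≤ M) (β : Fin M → ℝ) (hβmem : ∀ m, β m ∈ Ioo (0:ℝ) 1)
    (hβ : StrictAnti β) (μvec : Fin M → ℝ) (hμ : ∀ m, μvec m ∈ Icc (0:ℝ) 1) :
    ∃ (υ : TieBreaker) (D : Finset (ℕ → ℝ)) (x : ℕ → ℝ),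
      D.Nonempty ∧ (∀ y ∈ D, IsProject y) ∧ x ∈ D ∧
      ∀ Q : Fin M → ℝ, rcr β Q υ x D = ∑ m, Q m * μvec m := by
  classical
  set mlast : Fin M := ⟨M - 1, by omega⟩ with hmlast
  set b0 : ℝ := β mlast with hb0def
  have hb0 : b0 ∈ Ioo (0:ℝ) 1 := hβmem mlast
  have hble : ∀ m, b0 ≤ β m := by
    intro m
    exact hβ.antitone (by simp [hmlast, Fin.le_def]; omega)
  set u : ℝ := b0 / 2 with hudef
  set v : ℝ := 3 * b0 / 4 with hvdef
  have hu : 0 < u := by simp only [hudef]; linarith [hb0.1]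
  have huv : u < v := by simp only [hudef, hvdef]; linarith [hb0.1]
  have hv1 : v < 1 := by simp only [hvdef]; linarith [hb0.2]
  have hvβ : ∀ m, v < β m := fun m => by
    have := hble m; simp only [hvdef]; linarith [hb0.1]
  set c : Fin M → ℝ := fun m => v - μvec m * (v - u) with hcdef
  have hcmem : ∀ m, u ≤ c m ∧ c m ≤ v := by
    intro m
    obtain ⟨h0, h1⟩ := hμ m
    constructor
    · simp only [hcdef]; nlinarith
    · simp only [hcdef]; nlinarith
  set y : Fin M → (ℕ → ℝ) := fun m => yproj (β m) (c m) with hydef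
  set D : Finset (ℕ → ℝ) := insert xproj (Finset.image y Finset.univ) with hDdef
  have hDcoe : (↑D : Set (ℕ → ℝ)) = insert xproj (Set.range y) := by
    simp [hDdef]
  -- the value comparisons
  have hdvy : ∀ (γ : ℝ) (j : Fin M), dv γ (y j) = dv γ xproj + (c j - γ) * (γ - β j)^2 :=
    fun γ j => dv_yproj γ (β j) (c j)
  have hlt : ∀ m j : Fin M, j ≠ m → dv (β m) (y j) < dv (β m) xproj := by
    intro m j hjm
    rw [hdvy]
    have h1 : c j - β m < 0 := by have := hvβ m; have := (hcmem j).2; linarith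
    have h2 : 0 < (β m - β j)^2 := by
      have hne : β m - β j ≠ 0 := sub_ne_zero.mpr (fun h => hjm (hβ.injective h.symm))
      exact lt_of_le_of_ne (sq_nonneg _) (Ne.symm (pow_ne_zero 2 hne))
    nlinarith
  have heq : ∀ m : Fin M, dv (β m) (y m) = dv (β m) xproj := by
    intro m; rw [hdvy]; ring
  -- stage 1 maximizers
  have hmax1 : ∀ m : Fin M, MaxSet (↑D) (β m) = {xproj, y m} := by
    intro m
    ext z
    simp only [MaxSet, mem_setOf_eq, hDcoe, mem_insert_iff, Set.mem_range,
      mem_singleton_iff]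
    constructor
    · rintro ⟨hz | ⟨j, rfl⟩, hmax⟩
      · exact Or.inl hz
      · by_cases hjm : j = m
        · exact Or.inr (by rw [hjm])
        · exfalso
          have := hmax xproj (Or.inl rfl)
          have := hlt m j hjm
          linarith
    · intro hz
      have hdvz : dv (β m) z = dv (β m) xproj := by
        rcases hz with rfl | rfl
        · rfl
        · exact heq m
      refine ⟨?_, ?_⟩
      · rcases hz with rfl | rfl
        · exact Or.inl rfl
        · exact Or.inr ⟨m, rfl⟩
      · rintro w (rfl | ⟨j, rfl⟩)
        · rw [hdvz]
        · rw [hdvz]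
          by_cases hjm : j = m
          · rw [hjm, heq m]
          · exact (hlt m j hjm).le
  -- stage 2 membership
  have hmax2 : ∀ (m : Fin M) (γ : ℝ),
      xproj ∈ MaxSet ({xproj, y m} : Set (ℕ → ℝ)) γ ↔ (c m - γ) * (γ - β m)^2 ≤ 0 := by
    intro m γ
    constructor
    · rintro ⟨-, hmax⟩
      have := hmax (y m) (Set.mem_insert_iff.mpr (Or.inr rfl))
      rw [hdvy] at this
      linarith
    · intro h
      refine ⟨Set.mem_insert _ _, ?_⟩
      intro w hw
      simp only [Set.mem_insert_iff, Set.mem_singleton_iff] at hw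
      rcases hw with rfl | rfl
      · exact le_refl _
      · rw [hdvy]; linarith
  refine ⟨⟨νmeas u v, νmeas_prob hu huv hv1, fun γ => νmeas_noAtoms γ⟩, D, xproj,
    ⟨xproj, by simp [hDdef]⟩, ?_, by simp [hDdef], ?_⟩
  · intro w hw
    simp only [hDdef, Finset.mem_insert, Finset.mem_image] at hw
    rcases hw with rfl | ⟨j, -, rfl⟩
    · exact isProject_xproj
    · exact isProject_yproj (hβmem j) (by have := (hcmem j).1; linarith)
        (by have := (hcmem j).2; linarith)
  · intro Q
    unfold rcr
    apply Finset.sum_congr rfl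
    intro m _
    congr 1
    have hset : {γ : ↥(Icc (0:ℝ) 1) | xproj ∈ MaxSet (MaxSet (↑D) (β m)) (γ:ℝ)}
        = {γ : ↥(Icc (0:ℝ) 1) | (c m - (γ:ℝ)) * ((γ:ℝ) - β m)^2 ≤ 0} := by
      ext γ
      simp only [mem_setOf_eq, hmax1 m, hmax2 m]
    rw [hset]
    show (νmeas u v _).toReal = μvec m
    rw [νmeas_cond hu (hcmem m).1 (hcmem m).2 hv1 (hvβ m)]
    have : v - c m = μvec m * (v - u) := by simp [hcdef]
    rw [this, mul_div_assoc, div_self (by linarith), mul_one]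

theorem stmt5 (N M : ℕ) (hN : 1 ≤ N) (hM : 2 ≤ M)
    (β : Fin M → ℝ) (hβmem : ∀ m, β m ∈ Ioo (0:ℝ) 1) (hβ : StrictAnti β)
    (F : (Fin N → Fin M → ℝ) → (Fin M → ℝ))
    -- Assumption 1
    (hFmaps : ∀ P : Fin N → Fin M → ℝ, (∀ n, P n ∈ stdSimplex ℝ (Fin M)) →
      F P ∈ stdSimplex ℝ (Fin M))
    (hFconst : ∀ Q ∈ stdSimplex ℝ (Fin M), F (fun _ => Q) = Q)
    -- Restricted unanimity condition (5): common tie-breaker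
    (unan : ∀ P : Fin N → Fin M → ℝ, (∀ n, P n ∈ stdSimplex ℝ (Fin M)) →
      ∀ (υ : TieBreaker) (D : Finset (ℕ → ℝ)),
        D.Nonempty → (∀ y ∈ D, IsProject y) → ∀ x ∈ D,
        (∀ n, 1/2 ≤ rcr β (P n) υ x D) → 1/2 ≤ rcr β (F P) υ x D) :
    -- F(P^1,…,P^N) lies in the convex hull of {P^1,…,P^N}
    ∀ P : Fin N → Fin M → ℝ, (∀ n, P n ∈ stdSimplex ℝ (Fin M)) →
      ∃ μ : Fin N → ℝ, (∀ n, 0 ≤ μ n) ∧ (∑ n, μ n) = 1 ∧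
        F P = fun i => ∑ n, μ n * P n i := by
  classical
  intro P hP
  set L : (Fin N → ℝ) →ₗ[ℝ] (Fin M → ℝ) :=
    { toFun := fun w => fun i => ∑ n, w n * P n i
      map_add' := by
        intro a b; funext i
        simp only [Pi.add_apply, add_mul]
        rw [Finset.sum_add_distrib]
      map_smul' := by
        intro r a; funext i
        simp only [Pi.smul_apply, smul_eq_mul, RingHom.id_apply]
        rw [Finset.mul_sum]
        congr 1; funext n; ring } with hL
  set T : Set (Fin M → ℝ) := L '' stdSimplex ℝ (Fin N) with hT
  by_cases hFT : F P ∈ T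
  · obtain ⟨w, hw, hLw⟩ := hFT
    exact ⟨w, hw.1, hw.2, hLw.symm⟩
  exfalso
  have hTconv : Convex ℝ T := (convex_stdSimplex ℝ (Fin N)).linear_image L
  have hTclosed : IsClosed T :=
    ((isCompact_stdSimplex ℝ (Fin N)).image L.continuous_of_finiteDimensional).isClosed
  obtain ⟨f, cthr, hfa, hfx⟩ := geometric_hahn_banach_closed_point hTconv hTclosed hFT
  -- each P n is in T
  have hPT : ∀ n, P n ∈ T := by
    intro n
    refine ⟨fun k => if n = k then 1 else 0, ⟨fun k => by dsimp only; split <;> norm_num, by simp⟩, ?_⟩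
    funext i
    simp only [hL, LinearMap.coe_mk, AddHom.coe_mk, ite_mul, one_mul, zero_mul]
    simp
  -- f as a sum
  set lam : Fin M → ℝ := fun m => f (fun j => if m = j then 1 else 0) with hlam
  have hf : ∀ Q : Fin M → ℝ, f Q = ∑ m, Q m * lam m := by
    intro Q
    conv_lhs => rw [pi_eq_sum_univ Q]
    rw [map_sum]
    exact Finset.sum_congr rfl fun m _ => by rw [f.map_smul, smul_eq_mul]
  -- construct the weight vector
  set s : ℝ := ∑ m, |cthr - lam m| with hs
  have hs0 : 0 ≤ s := Finset.sum_nonneg fun m _ => abs_nonneg _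
  set ε : ℝ := 1 / (2 * (1 + s)) with hε
  have hε0 : 0 < ε := by positivity
  have hbound : ∀ m, |ε * (cthr - lam m)| ≤ 1 / 2 := by
    intro m
    have h1 : |cthr - lam m| ≤ s :=
      Finset.single_le_sum (fun k _ => abs_nonneg (cthr - lam k)) (Finset.mem_univ m)
    rw [abs_mul, abs_of_pos hε0]
    rw [hε]
    rw [div_mul_eq_mul_div, one_mul, div_le_div_iff₀ (by positivity) (by norm_num)]
    nlinarith
  set μvec : Fin M → ℝ := fun m => 1 / 2 + ε * (cthr - lam m) with hμvec
  have hμmem : ∀ m, μvec m ∈ Icc (0:ℝ) 1 := by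
    intro m
    have := hbound m
    have := abs_le.mp this
    constructor <;> [simp only [hμvec]; simp only [hμvec]] <;> linarith [this.1, this.2]
  have hsum : ∀ Q : Fin M → ℝ, Q ∈ stdSimplex ℝ (Fin M) →
      ∑ m, Q m * μvec m = 1 / 2 + ε * (cthr - f Q) := by
    intro Q hQ
    rw [hf Q]
    have : ∀ m, Q m * μvec m = (1 / 2 + ε * cthr) * Q m - ε * (Q m * lam m) := by
      intro m; simp only [hμvec]; ring
    rw [Finset.sum_congr rfl fun m _ => this m, Finset.sum_sub_distrib,
      ← Finset.mul_sum, ← Finset.mul_sum, hQ.2]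
    ring
  obtain ⟨υ, D, x, hDne, hDproj, hxD, hrcr⟩ := key (by omega) β hβmem hβ μvec hμmem
  have hmain := unan P hP υ D hDne hDproj x hxD (fun n => by
    rw [hrcr (P n), hsum (P n) (hP n)]
    have : f (P n) < cthr := hfa (P n) (hPT n)
    nlinarith)
  rw [hrcr (F P), hsum (F P) (hFmaps P hP)] at hmain
  nlinarith
end
end

section
/- Let M ≥ 3, let a ∈ ℝ^M, and let P, Q ∈ Δ satisfy P · a < 0 and Q · a > 0 (Euclidean inner product). Then there exists b ∈ (0,1)^M such that P · b < 1/2 and Q · b > 1/2, and, writing c_m := (Σ_{j≠m} b_j − (M−2) b_m)/(M−1), one has c_m > 0 for all m = 1, …, M and Σ_{m=1}^M c_m < 1. -/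
open Set

theorem stmt7 (M : ℕ) (hM : 3 ≤ M) (a : Fin M → ℝ) (P Q : Fin M → ℝ)
    (hP : P ∈ stdSimplex ℝ (Fin M)) (hQ : Q ∈ stdSimplex ℝ (Fin M))
    (hPa : ∑ m, P m * a m < 0) (hQa : 0 < ∑ m, Q m * a m) :
    ∃ b : Fin M → ℝ, (∀ m, b m ∈ Ioo (0:ℝ) 1) ∧
      (∑ m, P m * b m) < 1/2 ∧ 1/2 < (∑ m, Q m * b m) ∧
      (∀ m : Fin M,
        0 < ((∑ j ∈ Finset.univ.erase m, b j) - ((M:ℝ) - 2) * b m) / ((M:ℝ) - 1)) ∧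
      (∑ m, ((∑ j ∈ Finset.univ.erase m, b j) - ((M:ℝ) - 2) * b m) / ((M:ℝ) - 1)) < 1 := by
  have hM3 : (3:ℝ) ≤ (M:ℝ) := by exact_mod_cast hM
  set T : ℝ := ∑ j, |a j| with hTdef
  have hT0 : 0 ≤ T := Finset.sum_nonneg fun j _ => abs_nonneg _
  have hDpos : 0 < 4 * (M:ℝ) * (1 + T) := by nlinarith
  set ε : ℝ := 1 / (4 * (M:ℝ) * (1 + T)) with hεdef
  have hεpos : 0 < ε := by positivity
  have hkey : ε * ((M:ℝ) * T) < 1/4 := by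
    have h1 : ε * ((M:ℝ) * (1 + T)) = 1/4 := by
      rw [hεdef]; field_simp
    nlinarith
  have habs : ∀ m, |a m| ≤ T :=
    fun m => Finset.single_le_sum (f := fun j => |a j|) (fun j _ => abs_nonneg _)
      (Finset.mem_univ m)
  set A : ℝ := ∑ j, a j with hAdef
  have hA : |A| ≤ T := Finset.abs_sum_le_sum_abs _ _
  have hTMT : T ≤ (M:ℝ) * T := by nlinarith
  have hsmall : ∀ m, ε * |a m| < 1/4 := by
    intro m
    have h1 : ε * |a m| ≤ ε * T := mul_le_mul_of_nonneg_left (habs m) hεpos.le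
    have h2 : ε * T ≤ ε * ((M:ℝ) * T) := mul_le_mul_of_nonneg_left hTMT hεpos.le
    linarith
  have hS : ∑ j, (1/2 + ε * a j) = (M:ℝ) * (1/2) + ε * A := by
    rw [Finset.sum_add_distrib, Finset.sum_const, Finset.card_univ, Fintype.card_fin,
      Finset.mul_sum, nsmul_eq_mul]
  have hnum : ∀ m : Fin M,
      (∑ j ∈ Finset.univ.erase m, (1/2 + ε * a j)) - ((M:ℝ) - 2) * (1/2 + ε * a m)
      = 1/2 + ε * (A - ((M:ℝ) - 1) * a m) := by
    intro m
    rw [Finset.sum_erase_eq_sub (Finset.mem_univ m), hS]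
    ring
  have hεbound : ∀ m : Fin M, ε * |A - ((M:ℝ) - 1) * a m| < 1/4 := by
    intro m
    have h1 : |A - ((M:ℝ) - 1) * a m| ≤ |A| + |((M:ℝ) - 1) * a m| := abs_sub _ _
    have h2 : |((M:ℝ) - 1) * a m| = ((M:ℝ) - 1) * |a m| := by
      rw [abs_mul, abs_of_nonneg (show (0:ℝ) ≤ (M:ℝ) - 1 by linarith)]
    have h3 : |A - ((M:ℝ) - 1) * a m| ≤ (M:ℝ) * T := by
      have := habs m
      nlinarith
    have h4 : ε * |A - ((M:ℝ) - 1) * a m| ≤ ε * ((M:ℝ) * T) :=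
      mul_le_mul_of_nonneg_left h3 hεpos.le
    linarith
  refine ⟨fun m => 1/2 + ε * a m, ?_, ?_, ?_, ?_, ?_⟩
  · intro m
    have h := hsmall m
    have h1 : ε * a m ≤ ε * |a m| :=
      mul_le_mul_of_nonneg_left (le_abs_self _) hεpos.le
    have h2 : -(ε * |a m|) ≤ ε * a m := by
      have := mul_le_mul_of_nonneg_left (neg_abs_le (a m)) hεpos.le
      linarith
    constructor <;> simp only <;> linarith
  · have : ∑ m, P m * (1/2 + ε * a m)
        = (∑ m, P m) * (1/2) + ε * ∑ m, P m * a m := by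
      rw [Finset.sum_mul, Finset.mul_sum, ← Finset.sum_add_distrib]
      congr 1; ext m; ring
    simp only [this, hP.2]
    nlinarith
  · have : ∑ m, Q m * (1/2 + ε * a m)
        = (∑ m, Q m) * (1/2) + ε * ∑ m, Q m * a m := by
      rw [Finset.sum_mul, Finset.mul_sum, ← Finset.sum_add_distrib]
      congr 1; ext m; ring
    simp only [this, hQ.2]
    nlinarith
  · intro m
    simp only
    rw [hnum m]
    apply div_pos _ (by linarith : (0:ℝ) < (M:ℝ) - 1)
    have h2 : -(ε * |A - ((M:ℝ) - 1) * a m|) ≤ ε * (A - ((M:ℝ) - 1) * a m) := by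
      have := mul_le_mul_of_nonneg_left (neg_abs_le (A - ((M:ℝ) - 1) * a m)) hεpos.le
      linarith
    have := hεbound m
    linarith
  · simp only
    have hrw : ∀ m ∈ Finset.univ,
        ((∑ j ∈ Finset.univ.erase m, (1/2 + ε * a j)) - ((M:ℝ) - 2) * (1/2 + ε * a m)) / ((M:ℝ) - 1)
        = (1/2 + ε * (A - ((M:ℝ) - 1) * a m)) / ((M:ℝ) - 1) := by
      intro m _; rw [hnum m]
    rw [Finset.sum_congr rfl hrw, ← Finset.sum_div,
      div_lt_one (by linarith : (0:ℝ) < (M:ℝ) - 1)]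
    have hsum : ∑ m : Fin M, (1/2 + ε * (A - ((M:ℝ) - 1) * a m))
        = (M:ℝ) * (1/2) + ε * (A * (M:ℝ) - ((M:ℝ) - 1) * A) := by
      rw [Finset.sum_add_distrib, Finset.sum_const, Finset.card_univ, Fintype.card_fin,
        ← Finset.mul_sum, nsmul_eq_mul]
      congr 1
      rw [Finset.sum_sub_distrib, Finset.sum_const, Finset.card_univ, Fintype.card_fin,
        ← Finset.mul_sum, ← hAdef, nsmul_eq_mul]
      ring
    rw [hsum]
    have h1 : ε * A ≤ ε * |A| := mul_le_mul_of_nonneg_left (le_abs_self _) hεpos.le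
    have h2a : ε * |A| ≤ ε * T := mul_le_mul_of_nonneg_left hA hεpos.le
    have h2b : ε * T ≤ ε * ((M:ℝ) * T) := mul_le_mul_of_nonneg_left hTMT hεpos.le
    nlinarith
end

section
/- Let N ≥ 2, let λ_1, …, λ_N be strictly positive reals summing to one, and let w_0, w_1, …, w_N : [0,1] → [0,1] be differentiable functions with w_n(0) = 0 and w_n(1) = 1 for every n = 0, 1, …, N. If Σ_{n=1}^N λ_n w_n(p_n) = w_0(Σ_{n=1}^N λ_n p_n) for every (p_1, …, p_N) ∈ [0,1]^N, then w_n(p) = p for every p ∈ [0,1] and every n = 0, 1, …, N. -/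
open Set

theorem stmt8 (N : ℕ) (hN : 2 ≤ N)
    (lam : Fin N → ℝ) (hlam : ∀ n, 0 < lam n) (hsum : ∑ n, lam n = 1)
    (w0 : ℝ → ℝ) (w : Fin N → ℝ → ℝ)
    (hw0d : DifferentiableOn ℝ w0 (Icc 0 1))
    (hwd : ∀ n, DifferentiableOn ℝ (w n) (Icc 0 1))
    (hw0maps : MapsTo w0 (Icc 0 1) (Icc 0 1))
    (hwmaps : ∀ n, MapsTo (w n) (Icc 0 1) (Icc 0 1))
    (hw00 : w0 0 = 0) (hw01 : w0 1 = 1)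
    (hwn0 : ∀ n, w n 0 = 0) (hwn1 : ∀ n, w n 1 = 1)
    (heq : ∀ p : Fin N → ℝ, (∀ n, p n ∈ Icc (0:ℝ) 1) →
      ∑ n, lam n * w n (p n) = w0 (∑ n, lam n * p n)) :
    (∀ p ∈ Icc (0:ℝ) 1, w0 p = p) ∧ ∀ n, ∀ p ∈ Icc (0:ℝ) 1, w n p = p := by
  -- two distinct indices
  obtain ⟨i0, i1, hi01⟩ : ∃ i j : Fin N, i ≠ j :=
    ⟨⟨0, by omega⟩, ⟨1, by omega⟩, by simp [Fin.ext_iff]⟩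
  -- each lam n ≤ 1 - lam m for n ≠ m
  have hpair : ∀ n m : Fin N, n ≠ m → lam n + lam m ≤ 1 := by
    intro n m hnm
    rw [← hsum, ← Finset.sum_pair hnm]
    apply Finset.sum_le_sum_of_subset_of_nonneg (Finset.subset_univ _)
    intro i _ _
    exact (hlam i).le
  have hlam_lt1 : ∀ n, lam n < 1 := by
    intro n
    rcases eq_or_ne n i0 with rfl | hn
    · have := hpair n i1 hi01
      linarith [hlam i1]
    · have := hpair n i0 hn
      linarith [hlam i0]
  -- L : uniform bound < 1 on all lam n
  set L : ℝ := 1 - min (lam i0) (lam i1) with hL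
  have hmin0 : min (lam i0) (lam i1) ≤ lam i0 := min_le_left _ _
  have hmin1 : min (lam i0) (lam i1) ≤ lam i1 := min_le_right _ _
  have hminpos : 0 < min (lam i0) (lam i1) := lt_min (hlam i0) (hlam i1)
  have hL1 : L < 1 := by simp only [hL]; linarith
  have hLn : ∀ n, lam n ≤ L := by
    intro n
    rcases eq_or_ne n i0 with rfl | hn
    · have := hpair n i1 hi01
      simp only [hL]; linarith
    · have := hpair n i0 hn
      simp only [hL]; linarith
  have hL0 : 0 < L := lt_of_lt_of_le (hlam i0) (hLn i0)
  -- Lemma A : lam n * w n t = w0 (lam n * t)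
  have hA : ∀ n, ∀ t ∈ Icc (0:ℝ) 1, lam n * w n t = w0 (lam n * t) := by
    intro n t ht
    have hp : ∀ j, (if j = n then t else 0) ∈ Icc (0:ℝ) 1 := by
      intro j; split <;> simp [ht, ht.1, ht.2]
    have h := heq (fun j => if j = n then t else 0) hp
    have hLHS : ∑ j, lam j * w j (if j = n then t else 0) = lam n * w n t := by
      rw [Finset.sum_eq_single n]
      · simp
      · intro j _ hj; simp [hj, hwn0 j]
      · simp
    have hRHS : ∑ j, lam j * (if j = n then t else 0) = lam n * t := by
      rw [Finset.sum_eq_single n]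
      · simp
      · intro j _ hj; simp [hj]
      · simp
    rw [hLHS, hRHS] at h
    exact h
  -- key scaling identity: ∑ n, w0 (lam n * t) = w0 t
  have hkey : ∀ t ∈ Icc (0:ℝ) 1, ∑ n, w0 (lam n * t) = w0 t := by
    intro t ht
    have h := heq (fun _ => t) (fun _ => ht)
    rw [← Finset.sum_mul, hsum, one_mul] at h
    rw [← h]
    exact Finset.sum_congr rfl fun n _ => (hA n t ht).symm
  -- auxiliary sum computation
  have hsum' : ∀ a t : ℝ, ∑ n, a * (lam n * t) = a * t := by
    intro a t
    rw [← Finset.mul_sum, ← Finset.sum_mul, hsum, one_mul]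
  -- derivative at 0
  set c : ℝ := derivWithin w0 (Icc 0 1) 0 with hc
  have h0mem : (0:ℝ) ∈ Icc (0:ℝ) 1 := by constructor <;> norm_num
  have hder : HasDerivWithinAt w0 c (Icc 0 1) 0 :=
    (hw0d 0 h0mem).hasDerivWithinAt
  -- little-o estimate near 0
  have hεδ : ∀ ε : ℝ, 0 < ε → ∃ δ : ℝ, 0 < δ ∧
      ∀ t ∈ Icc (0:ℝ) 1, t ≤ δ → |w0 t - c * t| ≤ ε * t := by
    intro ε hε
    have ho := hasDerivWithinAt_iff_isLittleO.mp hder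
    have hev := ho.def hε
    rw [Filter.eventually_iff, Metric.mem_nhdsWithin_iff] at hev
    obtain ⟨δ, hδ, hsub⟩ := hev
    refine ⟨δ/2, by linarith, ?_⟩
    intro t ht htδ
    have hball : t ∈ Metric.ball (0:ℝ) δ := by
      rw [Metric.mem_ball, Real.dist_eq, sub_zero, abs_of_nonneg ht.1]; linarith
    have h := hsub ⟨hball, ht⟩
    simp only [mem_setOf_eq, hw00, sub_zero, smul_eq_mul, Real.norm_eq_abs] at h
    rw [abs_of_nonneg ht.1] at h
    calc |w0 t - c * t| = |w0 t - 0 - t * c| := by ring_nf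
      _ ≤ ε * t := by simpa [hw00] using h
  -- main estimate by scaling induction
  have main : ∀ ε : ℝ, 0 < ε → ∀ t ∈ Icc (0:ℝ) 1, |w0 t - c * t| ≤ ε * t := by
    intro ε hε
    obtain ⟨δ, hδ, hδ'⟩ := hεδ ε hε
    have ind : ∀ k : ℕ, ∀ t ∈ Icc (0:ℝ) 1, t * L ^ k ≤ δ → |w0 t - c * t| ≤ ε * t := by
      intro k
      induction k with
      | zero => intro t ht h; exact hδ' t ht (by simpa using h)
      | succ k IH =>
        intro t ht h
        have hdecomp : w0 t - c * t = ∑ n, (w0 (lam n * t) - c * (lam n * t)) := by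
          rw [Finset.sum_sub_distrib, hkey t ht, hsum']
        rw [hdecomp]
        calc |∑ n, (w0 (lam n * t) - c * (lam n * t))|
            ≤ ∑ n, |w0 (lam n * t) - c * (lam n * t)| := Finset.abs_sum_le_sum_abs _ _
          _ ≤ ∑ n, ε * (lam n * t) := by
              apply Finset.sum_le_sum
              intro n _
              have hub : lam n * t ≤ 1 := by
                have := mul_le_mul (hlam_lt1 n).le ht.2 ht.1 zero_le_one
                linarith
              apply IH
              · exact ⟨mul_nonneg (hlam n).le ht.1, hub⟩
              · have h1 : lam n * t * L ^ k ≤ L * t * L ^ k :=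
                  mul_le_mul_of_nonneg_right
                    (mul_le_mul_of_nonneg_right (hLn n) ht.1) (pow_nonneg hL0.le k)
                have h2 : L * t * L ^ k = t * L ^ (k+1) := by ring
                linarith [h2 ▸ h1, h]
          _ = ε * t := hsum' ε t
    intro t ht
    obtain ⟨k, hk⟩ := exists_pow_lt_of_lt_one hδ hL1
    apply ind k t ht
    calc t * L ^ k ≤ 1 * L ^ k :=
          mul_le_mul_of_nonneg_right ht.2 (pow_nonneg hL0.le k)
      _ ≤ δ := by rw [one_mul]; exact hk.le
  -- conclude w0 t = c * t
  have hlin : ∀ t ∈ Icc (0:ℝ) 1, w0 t = c * t := by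
    intro t ht
    have habs : |w0 t - c * t| ≤ 0 := by
      apply le_of_forall_pos_le_add
      intro ε hε
      calc |w0 t - c * t| ≤ ε * t := main ε hε t ht
        _ ≤ ε * 1 := mul_le_mul_of_nonneg_left ht.2 hε.le
        _ = 0 + ε := by ring
    have h2 := abs_nonneg (w0 t - c * t)
    have h3 : |w0 t - c * t| = 0 := le_antisymm habs h2
    rw [abs_eq_zero] at h3
    linarith
  have hc1 : c = 1 := by
    have := hlin 1 (by constructor <;> norm_num)
    rw [hw01] at this
    linarith
  have hw0id : ∀ p ∈ Icc (0:ℝ) 1, w0 p = p := by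
    intro p hp
    rw [hlin p hp, hc1, one_mul]
  refine ⟨hw0id, ?_⟩
  intro n p hp
  have h1 := hA n p hp
  have hmem : lam n * p ∈ Icc (0:ℝ) 1 := by
    constructor
    · exact mul_nonneg (hlam n).le hp.1
    · calc lam n * p ≤ 1 * 1 := mul_le_mul (hlam_lt1 n).le hp.2 hp.1 zero_le_one
        _ = 1 := by ring
  rw [hw0id _ hmem] at h1
  have hne := (hlam n).ne'
  exact mul_left_cancel₀ hne h1
end

section
/- Let D be a menu whose elements are pairwise distinct projects, let P ∈ Δ, and let υ ∈ Ω be a nonatomic Borel probability measure on [0,1]. Then the random choice rule ρ induced by (P, υ) satisfies Σ_{x ∈ D} ρ(x, D) = 1. -/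
open MeasureTheory Set

noncomputable section

lemma dv_eq_sum_s9 {x : ℕ → ℝ} (hx : IsProject x) {s : Finset ℕ}
    (hs : Function.support x ⊆ ↑s) (β : ℝ) :
    dv β x = ∑ t ∈ s, β ^ t * x t := by
  apply tsum_eq_sum
  intro t ht
  have : x t = 0 := by
    by_contra h
    exact ht (hs h)
  simp [this]

lemma continuous_dv {x : ℕ → ℝ} (hx : IsProject x) :
    Continuous (fun β : ℝ => dv β x) := by
  have : (fun β : ℝ => dv β x) = fun β => ∑ t ∈ hx.1.toFinset, β ^ t * x t := by
    funext β
    exact dv_eq_sum_s9 hx (by simp) β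
  rw [this]
  exact continuous_finset_sum _ (fun t _ => by continuity)

lemma finite_ties {x y : ℕ → ℝ} (hx : IsProject x) (hy : IsProject y) (hxy : x ≠ y) :
    {γ : ℝ | dv γ x = dv γ y}.Finite := by
  classical
  set s := hx.1.toFinset ∪ hy.1.toFinset with hs
  set p : Polynomial ℝ := ∑ t ∈ s, Polynomial.monomial t (x t - y t) with hp
  have hcoeff : ∀ t, p.coeff t = if t ∈ s then x t - y t else 0 := by
    intro t
    rw [hp, Polynomial.finset_sum_coeff]
    simp only [Polynomial.coeff_monomial]
    exact Finset.sum_ite_eq' s t (fun u => x u - y u)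
  have hpne : p ≠ 0 := by
    obtain ⟨t, ht⟩ : ∃ t, x t ≠ y t := by
      by_contra h
      push_neg at h
      exact hxy (funext h)
    have hts : t ∈ s := by
      rcases ne_or_eq (x t) 0 with h | h
      · simp [hs, Function.mem_support, h]
      · have : y t ≠ 0 := by rw [h] at ht; exact fun h' => ht h'.symm
        simp [hs, Function.mem_support, this]
    intro h0
    have := hcoeff t
    rw [h0] at this
    simp [hts] at this
    exact ht (by linarith)
  have hsub : {γ : ℝ | dv γ x = dv γ y} ⊆ {γ : ℝ | p.IsRoot γ} := by
    intro γ hγ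
    simp only [mem_setOf_eq] at hγ ⊢
    have hxs : Function.support x ⊆ ↑s := by intro t ht; simp [hs]; left; simpa using ht
    have hys : Function.support y ⊆ ↑s := by intro t ht; simp [hs]; right; simpa using ht
    have : p.eval γ = dv γ x - dv γ y := by
      rw [dv_eq_sum_s9 hx hxs, dv_eq_sum_s9 hy hys, hp, Polynomial.eval_finset_sum,
        ← Finset.sum_sub_distrib]
      apply Finset.sum_congr rfl
      intro t _
      simp only [Polynomial.eval_monomial]
      ring
    unfold Polynomial.IsRoot
    rw [this, hγ, sub_self]
  exact (Polynomial.finite_setOf_isRoot hpne).subset hsub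

theorem stmt9 (M : ℕ) (hM : 2 ≤ M)
    (β : Fin M → ℝ) (hβmem : ∀ m, β m ∈ Icc (0:ℝ) 1) (hβ : StrictAnti β)
    (D : Finset (ℕ → ℝ)) (hDne : D.Nonempty) (hDproj : ∀ y ∈ D, IsProject y)
    (P : Fin M → ℝ) (hP : P ∈ stdSimplex ℝ (Fin M)) (υ : TieBreaker) :
    ∑ x ∈ D, rcr β P υ x D = 1 := by
  classical
  haveI : IsProbabilityMeasure υ.μ := υ.prob
  haveI : NullSingletonClass υ.μ := ⟨υ.noAtoms⟩
  unfold rcr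
  rw [Finset.sum_comm]
  have key : ∀ m : Fin M,
      ∑ x ∈ D, (υ.μ {γ : ↥(Icc (0:ℝ) 1) |
        x ∈ MaxSet (MaxSet (↑D) (β m)) (γ : ℝ)}).toReal = 1 := by
    intro m
    set E : Finset (ℕ → ℝ) := D.filter (fun x => ∀ y ∈ D, dv (β m) y ≤ dv (β m) x) with hE
    have hEcoe : (↑E : Set (ℕ → ℝ)) = MaxSet (↑D) (β m) := by
      ext z; simp [hE, MaxSet]
    have hEsub : E ⊆ D := Finset.filter_subset _ _
    have hEne : E.Nonempty := by
      obtain ⟨x, hxD, hxmax⟩ := D.exists_max_image (fun z => dv (β m) z) hDne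
      exact ⟨x, by simp only [hE, Finset.mem_filter]; exact ⟨hxD, hxmax⟩⟩
    set A : (ℕ → ℝ) → Set ↥(Icc (0:ℝ) 1) :=
      fun x => {γ : ↥(Icc (0:ℝ) 1) | x ∈ MaxSet (MaxSet (↑D) (β m)) (γ : ℝ)} with hA
    have hmem : ∀ z, z ∈ E ↔ z ∈ MaxSet (↑D) (β m) := by
      intro z; rw [← hEcoe]; simp
    have hAeq : ∀ x, A x = {γ : ↥(Icc (0:ℝ) 1) |
        x ∈ E ∧ ∀ y ∈ E, dv (γ : ℝ) y ≤ dv (γ : ℝ) x} := by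
      intro x
      ext γ
      simp only [hA, mem_setOf_eq, MaxSet, Set.mem_setOf_eq]
      constructor
      · rintro ⟨h1, h2⟩; exact ⟨(hmem x).2 h1, fun y hy => h2 y ((hmem y).1 hy)⟩
      · rintro ⟨h1, h2⟩; exact ⟨(hmem x).1 h1, fun y hy => h2 y ((hmem y).2 hy)⟩
    have hempty : ∀ x ∈ D, x ∉ E → A x = ∅ := by
      intro x _ hxE
      rw [hAeq]
      ext γ; simp [hxE]
    have hmeas : ∀ x ∈ E, MeasurableSet (A x) := by
      intro x hxE
      rw [hAeq]
      have : {γ : ↥(Icc (0:ℝ) 1) | x ∈ E ∧ ∀ y ∈ E, dv (γ : ℝ) y ≤ dv (γ : ℝ) x}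
          = ⋂ y ∈ E, {γ : ↥(Icc (0:ℝ) 1) | dv (γ : ℝ) y ≤ dv (γ : ℝ) x} := by
        ext γ; simp [hxE]
      rw [this]
      apply MeasurableSet.biInter (E.countable_toSet)
      intro y hy
      have hcx : Continuous (fun γ : ↥(Icc (0:ℝ) 1) => dv (γ:ℝ) x) :=
        (continuous_dv (hDproj x (hEsub hxE))).comp continuous_subtype_val
      have hcy : Continuous (fun γ : ↥(Icc (0:ℝ) 1) => dv (γ:ℝ) y) :=
        (continuous_dv (hDproj y (hEsub hy))).comp continuous_subtype_val
      exact measurableSet_le hcy.measurable hcx.measurable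
    have hcover : ⋃ x ∈ E, A x = univ := by
      apply eq_univ_of_forall
      intro γ
      obtain ⟨x, hxE, hxmax⟩ := E.exists_max_image (fun z => dv (γ : ℝ) z) hEne
      simp only [mem_iUnion]
      exact ⟨x, hxE, by rw [hAeq]; exact ⟨hxE, hxmax⟩⟩
    have hdisj : (↑E : Set (ℕ → ℝ)).Pairwise (Function.onFun (AEDisjoint υ.μ) A) := by
      intro x hx y hy hxy
      simp only [Function.onFun, AEDisjoint]
      refine measure_mono_null
        (t := {γ : ↥(Icc (0:ℝ) 1) | dv (γ:ℝ) x = dv (γ:ℝ) y}) ?_ ?_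
      · intro γ hγ
        rw [Set.mem_inter_iff, hAeq, hAeq] at hγ
        obtain ⟨⟨hx1, hx2⟩, ⟨hy1, hy2⟩⟩ := hγ
        exact le_antisymm (hy2 x hx1) (hx2 y hy1)
      · apply Set.Finite.measure_zero
        have hfin := finite_ties (hDproj x (hEsub (by simpa using hx)))
          (hDproj y (hEsub (by simpa using hy))) hxy
        have : {γ : ↥(Icc (0:ℝ) 1) | dv (γ:ℝ) x = dv (γ:ℝ) y}
            = (Subtype.val) ⁻¹' {γ : ℝ | dv γ x = dv γ y} := rfl
        rw [this]
        exact Set.Finite.preimage (Subtype.val_injective.injOn) hfin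
    have hsum : ∑ x ∈ E, υ.μ (A x) = 1 := by
      rw [← measure_biUnion_finset₀ hdisj (fun x hx => (hmeas x hx).nullMeasurableSet),
        hcover, measure_univ]
    calc ∑ x ∈ D, (υ.μ (A x)).toReal = ∑ x ∈ E, (υ.μ (A x)).toReal := by
          apply (Finset.sum_subset hEsub _).symm
          intro x hxD hxE
          rw [hempty x hxD hxE]
          simp
      _ = (∑ x ∈ E, υ.μ (A x)).toReal := by
          rw [ENNReal.toReal_sum]
          intro x _
          exact measure_ne_top _ _
      _ = 1 := by rw [hsum]; simp
  calc ∑ m, ∑ x ∈ D, P m * (υ.μ {γ : ↥(Icc (0:ℝ) 1) |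
        x ∈ MaxSet (MaxSet (↑D) (β m)) (γ : ℝ)}).toReal
      = ∑ m, P m * ∑ x ∈ D, (υ.μ {γ : ↥(Icc (0:ℝ) 1) |
        x ∈ MaxSet (MaxSet (↑D) (β m)) (γ : ℝ)}).toReal := by
        apply Finset.sum_congr rfl
        intro m _
        rw [Finset.mul_sum]
    _ = ∑ m, P m := by
        apply Finset.sum_congr rfl
        intro m _
        rw [key m, mul_one]
    _ = 1 := hP.2
end
end

section
/- Let M ≥ 2, let β_1, …, β_M satisfy β_1 > β_m > 0 for every m = 2, …, M, let t ∈ ℕ, and let α_2, …, α_M ≥ 0 with α_{m₀} > 0 for some m₀ ∈ {2, …, M}. For α_1 ≥ 0 define r(α_1) := (α_1 β_1^t + Σ_{m=2}^M α_m β_m^t)/(α_1 β_1^{t+1} + Σ_{m=2}^M α_m β_m^{t+1}) − 1. Then r is strictly decreasing in α_1: for any 0 ≤ α_1 < α_1′ one has r(α_1′) < r(α_1). -/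
/-- the discount rate
`r(α₁) = (α₁ β₁^t + Σ_{m=2}^M α_m β_m^t)/(α₁ β₁^{t+1} + Σ_{m=2}^M α_m β_m^{t+1}) − 1`
is strictly decreasing in `α₁`. The indices `m = 2, …, M` are modeled by `Fin (M - 1)`. -/
theorem stmt11 (M : ℕ) (hM : 2 ≤ M)
    (β1 : ℝ) (β : Fin (M - 1) → ℝ) (hβ : ∀ m, 0 < β m ∧ β m < β1) (t : ℕ)
    (α : Fin (M - 1) → ℝ) (hα : ∀ m, 0 ≤ α m)
    (m₀ : Fin (M - 1)) (hαm₀ : 0 < α m₀)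
    (r : ℝ → ℝ)
    (hr : ∀ a : ℝ, r a = (a * β1 ^ t + ∑ m, α m * β m ^ t) /
      (a * β1 ^ (t + 1) + ∑ m, α m * β m ^ (t + 1)) - 1) :
    ∀ a a' : ℝ, 0 ≤ a → a < a' → r a' < r a := by
  intro a a' ha haa'
  have hB : 0 < β1 := (hβ m₀).1.trans (hβ m₀).2
  have hS1 : 0 < ∑ m, α m * β m ^ (t + 1) := by
    apply Finset.sum_pos'
    · intro m _
      exact mul_nonneg (hα m) (le_of_lt (pow_pos (hβ m).1 _))
    · exact ⟨m₀, Finset.mem_univ _, mul_pos hαm₀ (pow_pos (hβ m₀).1 _)⟩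
  have hda : 0 < a * β1 ^ (t + 1) + ∑ m, α m * β m ^ (t + 1) := by
    have := mul_nonneg ha (le_of_lt (pow_pos hB (t + 1)))
    linarith
  have hda' : 0 < a' * β1 ^ (t + 1) + ∑ m, α m * β m ^ (t + 1) := by
    have : 0 ≤ a' * β1 ^ (t + 1) :=
      mul_nonneg (ha.trans haa'.le) (le_of_lt (pow_pos hB (t + 1)))
    linarith
  have hkey : (∑ m, α m * β m ^ (t + 1)) < β1 * ∑ m, α m * β m ^ t := by
    rw [Finset.mul_sum]
    apply Finset.sum_lt_sum
    · intro m _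
      have h1 : β m ^ (t + 1) ≤ β1 * β m ^ t := by
        rw [pow_succ']
        exact mul_le_mul_of_nonneg_right (hβ m).2.le (pow_pos (hβ m).1 t).le
      calc α m * β m ^ (t + 1) ≤ α m * (β1 * β m ^ t) :=
            mul_le_mul_of_nonneg_left h1 (hα m)
        _ = β1 * (α m * β m ^ t) := by ring
    · refine ⟨m₀, Finset.mem_univ _, ?_⟩
      have h1 : β m₀ ^ (t + 1) < β1 * β m₀ ^ t := by
        rw [pow_succ']
        exact mul_lt_mul_of_pos_right (hβ m₀).2 (pow_pos (hβ m₀).1 t)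
      calc α m₀ * β m₀ ^ (t + 1) < α m₀ * (β1 * β m₀ ^ t) :=
            mul_lt_mul_of_pos_left h1 hαm₀
        _ = β1 * (α m₀ * β m₀ ^ t) := by ring
  set S0 := ∑ m, α m * β m ^ t with hS0
  set S1 := ∑ m, α m * β m ^ (t + 1) with hS1def
  rw [hr, hr, sub_lt_sub_iff_right, div_lt_div_iff₀ hda' hda]
  rw [pow_succ]
  have hp : 0 < (a' - a) * (β1 * ∑ m, α m * β m ^ t - ∑ m, α m * β m ^ (t + 1)) :=
    mul_pos (sub_pos.2 haa') (sub_pos.2 hkey)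
  have hps : (β1 : ℝ) ^ (t + 1) = β1 ^ t * β1 := pow_succ β1 t
  nlinarith [pow_pos hB t, mul_pos (pow_pos hB t) hp]
end
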